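/- arXiv:2302.10110 — 7 statements merged into one kernel-verified Lean document; each statement's English description precedes it below -/
import Mathlib

section
/- Let G be a connected graph with n vertices and total edge multiplicity 𝔪, p = 𝔪 - n + 1, and X ⊆ V(G) a set satisfying conditions (i)-(iv) of the structural lemma (in particular |X| ≤ 4p, all multi-edges inside X, G - E(G[X]) a forest, each component of G - X attached to X at one or two vertices). If q is the number of connected components of G - X that are attached to exactly two vertices of X, then q ≤ 4p - 1 and G[X] has at most 5p - q - 1 edges. -/
open SimpleGraph Finset

set_option linter.unusedSectionVars false
set_option linter.unusedVariables false
set_option maxHeartbeats 1000000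
section Helpers
variable {V : Type*} [Fintype V] [DecidableEq V]

lemma dist_le_of_mem_support {G : SimpleGraph V} {u v w : V} (p : G.Walk u v)
    (h : w ∈ p.support) : G.dist w v ≤ p.length :=
  le_trans (G.dist_le (p.dropUntil w h)) (p.length_dropUntil_le h)

lemma acyclic_card_le {G : SimpleGraph V} [DecidableRel G.Adj] [Nonempty V]
    (hac : G.IsAcyclic) : G.edgeFinset.card + 1 ≤ Fintype.card V := by
  classical
  set r : V → V := fun u => (G.connectedComponentMk u).out with hr
  have hmk : ∀ u, G.connectedComponentMk (r u) = G.connectedComponentMk u := by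
    intro u; exact (G.connectedComponentMk u).out_eq
  have hreach : ∀ u, G.Reachable u (r u) := fun u => ConnectedComponent.eq.mp (hmk u).symm
  have hrr : ∀ u, r (r u) = r u := by
    intro u
    exact congrArg Quot.out (hmk u)
  have key : ∀ e ∈ G.edgeFinset, ∃ x y, G.Adj x y ∧ e = s(x, y) ∧
      G.dist y (r x) + 1 = G.dist x (r x) := by
    intro e he
    induction e with
    | _ a b =>
    have hab : G.Adj a b := mem_edgeFinset.mp he
    have hrb : r b = r a := by
      exact congrArg Quot.out (ConnectedComponent.sound hab.symm.reachable)
    have reach_a : G.Reachable a (r a) := hreach a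
    have reach_b : G.Reachable b (r a) := hab.symm.reachable.trans reach_a
    -- the two distances differ
    have hne : G.dist a (r a) ≠ G.dist b (r a) := by
      intro heq
      rcases Nat.eq_zero_or_pos (G.dist a (r a)) with h0 | hpos
      · have ha0 : a = r a := reach_a.dist_eq_zero_iff.mp h0
        have hb0 : b = r a := reach_b.dist_eq_zero_iff.mp (heq ▸ h0)
        exact hab.ne (ha0.trans hb0.symm)
      · obtain ⟨pb, hpb, hpblen⟩ := reach_b.exists_path_of_dist
        have hans : a ∉ pb.support := by
          intro hmem
          have hsplit : (pb.takeUntil a hmem).length + (pb.dropUntil a hmem).length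
              = pb.length := by
            have := congrArg Walk.length (pb.take_spec hmem)
            rwa [Walk.length_append] at this
          have h1 : G.dist b a ≤ (pb.takeUntil a hmem).length :=
            G.dist_le _
          have h2 : 1 ≤ G.dist b a := hab.symm.reachable.pos_dist_of_ne hab.ne'
          have h3 : G.dist a (r a) ≤ (pb.dropUntil a hmem).length := G.dist_le _
          omega
        obtain ⟨pa, hpa, hpalen⟩ := reach_a.exists_path_of_dist
        have : (⟨pa, hpa⟩ : G.Path a (r a)) = ⟨pb.cons hab, hpb.cons hans⟩ :=
          hac.path_unique _ _
        have hlen := congrArg (fun p => (Subtype.val p).length) this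
        simp only [Walk.length_cons] at hlen
        omega
    have hd1 : G.dist a (r a) ≤ G.dist b (r a) + 1 := by
      obtain ⟨q, hq, hqlen⟩ := reach_b.exists_path_of_dist
      have := G.dist_le (q.cons hab)
      simp only [Walk.length_cons] at this
      omega
    have hd2 : G.dist b (r a) ≤ G.dist a (r a) + 1 := by
      obtain ⟨q, hq, hqlen⟩ := reach_a.exists_path_of_dist
      have := G.dist_le (q.cons hab.symm)
      simp only [Walk.length_cons] at this
      omega
    rcases lt_or_gt_of_ne hne with hlt | hgt
    · exact ⟨b, a, hab.symm, Sym2.eq_swap, by rw [hrb]; omega⟩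
    · exact ⟨a, b, hab, rfl, by omega⟩
  -- injection from edges into non-root vertices
  set f : Sym2 V → V := fun e =>
    if h : ∃ x y, G.Adj x y ∧ e = s(x, y) ∧ G.dist y (r x) + 1 = G.dist x (r x)
    then h.choose else Classical.arbitrary V
    with hf
  have hspec : ∀ e ∈ G.edgeFinset, ∃ y, G.Adj (f e) y ∧ e = s(f e, y) ∧
      G.dist y (r (f e)) + 1 = G.dist (f e) (r (f e)) := by
    intro e he
    have hex := key e he
    have : f e = hex.choose := by rw [hf]; simp only [dif_pos hex]
    rw [this]
    exact hex.choose_spec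
  set v₀ : V := Classical.arbitrary V with hv₀
  have hmap : ∀ e ∈ G.edgeFinset, f e ∈ univ.erase (r v₀) := by
    intro e he
    obtain ⟨y, h1, h2, h3⟩ := hspec e he
    rw [Finset.mem_erase]
    refine ⟨?_, Finset.mem_univ _⟩
    intro hx
    have : r (f e) = f e := by rw [hx, hrr, ← hx]
    rw [this] at h3
    simp [G.dist_self] at h3
  have hinj : Set.InjOn f (G.edgeFinset : Set (Sym2 V)) := by
    intro e he e' he' heq
    obtain ⟨y, h1, h2, h3⟩ := hspec e (by simpa using he)
    obtain ⟨y', h1', h2', h3'⟩ := hspec e' (by simpa using he')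
    rw [heq] at h2 h3 h1
    set x := f e' with hx
    by_cases hyy : y = y'
    · rw [h2, h2', hyy]
    · exfalso
      have reach_y : G.Reachable y (r x) := h1.symm.reachable.trans (hreach x)
      have reach_y' : G.Reachable y' (r x) := h1'.symm.reachable.trans (hreach x)
      obtain ⟨py, hpy, hpylen⟩ := reach_y.exists_path_of_dist
      obtain ⟨py', hpy', hpylen'⟩ := reach_y'.exists_path_of_dist
      have hxs : x ∉ py.support := by
        intro hmem
        have := dist_le_of_mem_support py hmem
        omega
      have hxs' : x ∉ py'.support := by
        intro hmem
        have := dist_le_of_mem_support py' hmem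
        omega
      have huniq : (⟨py.cons h1, hpy.cons hxs⟩ : G.Path x (r x))
          = ⟨py'.cons h1', hpy'.cons hxs'⟩ := hac.path_unique _ _
      have := congrArg (fun p => (Subtype.val p).getVert 1) huniq
      simp only [Walk.getVert_cons _ _ one_ne_zero, Nat.sub_self, Walk.getVert_zero] at this
      exact hyy this
  have hcard := Finset.card_le_card_of_injOn f hmap hinj
  simp only [Finset.card_erase_of_mem (Finset.mem_univ _), Finset.card_univ] at hcard
  have : 1 ≤ Fintype.card V := Fintype.card_pos
  omega

lemma conn_card_le {G : SimpleGraph V} [DecidableRel G.Adj] (h : G.Connected) :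
    Fintype.card V ≤ G.edgeFinset.card + 1 := by
  classical
  obtain ⟨v₀⟩ := h.nonempty
  have key : ∀ u : V, u ≠ v₀ → ∃ w, G.Adj u w ∧ G.dist w v₀ + 1 = G.dist u v₀ := by
    intro u hu
    obtain ⟨p, hp, hlen⟩ := h.exists_path_of_dist u v₀
    cases p with
    | nil => exact absurd rfl hu
    | cons hadj p' =>
      rename_i w
      refine ⟨w, hadj, ?_⟩
      have h1 : G.dist w v₀ ≤ p'.length := G.dist_le p'
      obtain ⟨q, hq, hqlen⟩ := h.exists_path_of_dist w v₀
      have h2 : G.dist u v₀ ≤ q.length + 1 := by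
        have := G.dist_le (q.cons hadj)
        simpa [Walk.length_cons] using this
      have hpos : 0 < G.dist u v₀ := h.pos_dist_of_ne hu
      simp only [Walk.length_cons] at hlen
      omega
  set f : V → Sym2 V := fun u =>
    if hu : ∃ w, G.Adj u w ∧ G.dist w v₀ + 1 = G.dist u v₀ then s(u, hu.choose) else s(u, u)
    with hf
  have hspec : ∀ u ∈ univ.erase v₀, ∃ w, G.Adj u w ∧
      G.dist w v₀ + 1 = G.dist u v₀ ∧ f u = s(u, w) := by
    intro u hu
    have hu' : u ≠ v₀ := (Finset.mem_erase.mp hu).1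
    have hex := key u hu'
    exact ⟨hex.choose, hex.choose_spec.1, hex.choose_spec.2, by rw [hf]; simp only [dif_pos hex]⟩
  have hinj : Set.InjOn f (univ.erase v₀ : Finset V) := by
    intro a ha b hb hab
    obtain ⟨wa, ha1, ha2, ha3⟩ := hspec a ha
    obtain ⟨wb, hb1, hb2, hb3⟩ := hspec b hb
    rw [ha3, hb3, Sym2.eq_iff] at hab
    rcases hab with ⟨h1, h2⟩ | ⟨h1, h2⟩
    · exact h1
    · subst h1 h2; omega
  have hmap : ∀ u ∈ univ.erase v₀, f u ∈ G.edgeFinset := by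
    intro u hu
    obtain ⟨w, h1, _, h3⟩ := hspec u hu
    rw [h3, mem_edgeFinset]
    exact h1
  have := Finset.card_le_card_of_injOn f hmap hinj
  simp only [Finset.card_erase_of_mem (Finset.mem_univ v₀), Finset.card_univ] at this
  omega

end Helpers

/-- With `X` as in the structural lemma (Statement 2), if `q` is the number
of connected components of `G - X` attached to exactly two vertices of `X`, then `q ≤ 4p - 1`
and `G[X]` has at most `5p - q - 1` edges. -/
theorem stmt3 {V : Type*} [Fintype V] [DecidableEq V]
    (G : SimpleGraph V) [DecidableRel G.Adj] (hconn : G.Connected)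
    (m : Sym2 V → ℕ) (hm : ∀ e ∈ G.edgeFinset, 1 ≤ m e)
    (p : ℕ) (hp : p = (∑ e ∈ G.edgeFinset, m e) + 1 - Fintype.card V)
    (v : V) (X : Finset V) (hv : v ∈ X) (hcard : X.card ≤ 4 * p)
    (hR : ∀ e ∈ G.edgeFinset, 2 ≤ m e → ∀ u ∈ e, u ∈ X)
    (hforest : (G.deleteEdges {e : Sym2 V | ∀ u ∈ e, u ∈ X}).IsAcyclic)
    (hcomp : ∀ c : (G.induce {u : V | u ∉ X}).ConnectedComponent,
      (G.induce (Subtype.val '' c.supp)).IsTree ∧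
      (∀ x ∈ X, {u ∈ Subtype.val '' c.supp | G.Adj x u}.Subsingleton) ∧
      ({x : V | x ∈ X ∧ ∃ u ∈ Subtype.val '' c.supp, G.Adj x u}.ncard = 1 ∨
       {x : V | x ∈ X ∧ ∃ u ∈ Subtype.val '' c.supp, G.Adj x u}.ncard = 2))
    (q : ℕ)
    (hq : q = Nat.card {c : (G.induce {u : V | u ∉ X}).ConnectedComponent //
        {x : V | x ∈ X ∧ ∃ u ∈ Subtype.val '' c.supp, G.Adj x u}.ncard = 2}) :
    q ≤ 4 * p - 1 ∧ {e ∈ G.edgeSet | ∀ u ∈ e, u ∈ X}.ncard ≤ 5 * p - q - 1 := by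
  classical
  set S : Set (Sym2 V) := {e : Sym2 V | ∀ u ∈ e, u ∈ X} with hS
  set Fg := G.deleteEdges S with hFg
  set Vo : Set V := {u : V | u ∉ X} with hVo
  set G' := G.induce Vo with hG'
  set A : G'.ConnectedComponent → Finset (Sym2 V) := fun c =>
    Fg.edgeFinset.filter (fun e => ∃ u ∈ e, u ∈ (Subtype.val '' c.supp)) with hA
  -- membership facts
  have himg_notX : ∀ c : G'.ConnectedComponent, ∀ u ∈ (Subtype.val '' c.supp), u ∉ X := by
    rintro c u ⟨⟨u', hu'⟩, _, rfl⟩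
    exact hu'
  have himg_eq : ∀ c c' : G'.ConnectedComponent, ∀ u, u ∈ (Subtype.val '' c.supp) → u ∈ (Subtype.val '' c'.supp) → c = c' := by
    rintro c c' u ⟨a, ha, rfl⟩ ⟨b, hb, hba⟩
    have : b = a := Subtype.val_injective hba
    subst this
    rw [← (ConnectedComponent.mem_supp_iff _ _).mp ha,
      ← (ConnectedComponent.mem_supp_iff _ _).mp hb]
  have himg_adj : ∀ (c c' : G'.ConnectedComponent) (u w : V), u ∈ (Subtype.val '' c.supp) → w ∈ (Subtype.val '' c'.supp) →
      G.Adj u w → c = c' := by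
    rintro c c' u w ⟨a, ha, rfl⟩ ⟨b, hb, rfl⟩ hadj
    have hadj' : G'.Adj a b := by
      rw [hG']
      exact hadj
    rw [← (ConnectedComponent.mem_supp_iff _ _).mp ha,
      ← (ConnectedComponent.mem_supp_iff _ _).mp hb]
    exact ConnectedComponent.sound hadj'.reachable
  -- disjointness of A
  have hdisj : ∀ c ∈ (univ : Finset G'.ConnectedComponent), ∀ c' ∈ univ, c ≠ c' →
      Disjoint (A c) (A c') := by
    intro c _ c' _ hne
    rw [Finset.disjoint_left]
    intro e he he'
    rw [hA] at he he'
    simp only [Finset.mem_filter] at he he'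
    obtain ⟨heF, u, hue, huc⟩ := he
    obtain ⟨_, u', hue', huc'⟩ := he'
    by_cases huu : u = u'
    · exact hne (himg_eq c c' u huc (huu ▸ huc'))
    · have hadj : G.Adj u u' := by
        have hge : Fg ≤ G := by rw [hFg]; exact G.deleteEdges_le S
        induction e with
        | _ a b =>
          have hab : Fg.Adj a b := (Fg.mem_edgeFinset).mp heF
          simp only [Sym2.mem_iff] at hue hue'
          rcases hue with rfl | rfl <;> rcases hue' with rfl | rfl
          · exact absurd rfl huu
          · exact hge hab
          · exact hge hab.symm
          · exact absurd rfl huu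
      exact hne (himg_adj c c' u u' huc huc' hadj)
  -- per-component lower bound
  set ac : G'.ConnectedComponent → ℕ := fun c =>
    (X.filter (fun x => ∃ u ∈ (Subtype.val '' c.supp), G.Adj x u)).card with hac
  have hA_le : ∀ c : G'.ConnectedComponent, (((Subtype.val '' c.supp)).ncard - 1) + ac c ≤ (A c).card := by
    intro c
    obtain ⟨htree, hsub, hnc⟩ := hcomp c
    set Int : Finset (Sym2 V) :=
      (G.induce ((Subtype.val '' c.supp))).edgeFinset.image (Sym2.map Subtype.val) with hInt
    set Att : Finset (Sym2 V) := (X.filter (fun x => ∃ u ∈ (Subtype.val '' c.supp), G.Adj x u)).image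
      (fun x => s(x, if h : ∃ u, u ∈ (Subtype.val '' c.supp) ∧ G.Adj x u then h.choose else x)) with hAtt
    have hmapinj : Function.Injective (Sym2.map (Subtype.val : (Subtype.val '' c.supp) → V)) :=
      Sym2.map.injective Subtype.val_injective
    have hIntcard : Int.card = ((Subtype.val '' c.supp)).ncard - 1 := by
      rw [hInt, Finset.card_image_of_injective _ hmapinj]
      have h1 := htree.card_edgeFinset
      have h2 : Fintype.card ↥(Subtype.val '' c.supp) = (Subtype.val '' c.supp : Set V).ncard := by
        rw [Set.ncard_eq_toFinset_card', Set.toFinset_card]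
      omega
    have hIntsub : Int ⊆ A c := by
      intro e he
      rw [hInt, Finset.mem_image] at he
      obtain ⟨e', he', rfl⟩ := he
      induction e' with
      | _ a b =>
        have hadj : G.Adj ↑a ↑b := by
          have := mem_edgeFinset.mp he'
          simpa using this
        have haimg : (a : V) ∈ (Subtype.val '' c.supp) := a.2
        rw [hA, Finset.mem_filter]
        constructor
        · rw [mem_edgeFinset, hFg, edgeSet_deleteEdges]
          refine ⟨hadj, ?_⟩
          rw [hS]
          simp only [Set.mem_setOf_eq, Sym2.map_pair_eq, not_forall]
          exact ⟨↑a, by simp, himg_notX c _ haimg⟩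
        · exact ⟨↑a, by simp, haimg⟩
    have hAttcard : Att.card = ac c := by
      rw [hAtt, hac, Finset.card_image_of_injOn]
      intro x hx y hy hxy
      simp only [Finset.mem_coe, Finset.mem_filter] at hx hy
      obtain ⟨hxX, u, hu, hxu⟩ := hx
      obtain ⟨hyX, w, hw, hyw⟩ := hy
      dsimp only at hxy
      have hex : ∃ u, u ∈ (Subtype.val '' c.supp) ∧ G.Adj x u := ⟨u, hu, hxu⟩
      have hey : ∃ u, u ∈ (Subtype.val '' c.supp) ∧ G.Adj y u := ⟨w, hw, hyw⟩
      rw [dif_pos hex, dif_pos hey, Sym2.eq_iff] at hxy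
      rcases hxy with ⟨h1, _⟩ | ⟨h1, h2⟩
      · exact h1
      · exact absurd hxX (h1 ▸ himg_notX c _ hey.choose_spec.1)
    have hAttsub : Att ⊆ A c := by
      intro e he
      rw [hAtt, Finset.mem_image] at he
      obtain ⟨x, hx, rfl⟩ := he
      simp only [Finset.mem_filter] at hx
      obtain ⟨hxX, u, hu, hxu⟩ := hx
      have hex : ∃ u, u ∈ (Subtype.val '' c.supp) ∧ G.Adj x u := ⟨u, hu, hxu⟩
      rw [dif_pos hex]
      obtain ⟨huimg, hadj⟩ := hex.choose_spec
      rw [hA, Finset.mem_filter]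
      constructor
      · rw [mem_edgeFinset, hFg, edgeSet_deleteEdges]
        refine ⟨hadj, ?_⟩
        rw [hS]
        simp only [Set.mem_setOf_eq, not_forall]
        exact ⟨hex.choose, by simp, himg_notX c _ huimg⟩
      · exact ⟨hex.choose, by simp, huimg⟩
    have hdisjIA : Disjoint Int Att := by
      rw [Finset.disjoint_left]
      intro e heI heA
      rw [hInt, Finset.mem_image] at heI
      obtain ⟨e', he', rfl⟩ := heI
      rw [hAtt, Finset.mem_image] at heA
      obtain ⟨x, hx, hxe⟩ := heA
      simp only [Finset.mem_filter] at hx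
      have hxmem : x ∈ Sym2.map Subtype.val e' := by rw [← hxe]; simp
      rw [Sym2.mem_map] at hxmem
      obtain ⟨a, _, rfl⟩ := hxmem
      exact himg_notX c _ a.2 hx.1
    calc (((Subtype.val '' c.supp)).ncard - 1) + ac c = Int.card + Att.card := by rw [hIntcard, hAttcard]
      _ = (Int ∪ Att).card := (Finset.card_union_of_disjoint hdisjIA).symm
      _ ≤ (A c).card := Finset.card_le_card (Finset.union_subset hIntsub hAttsub)
  -- sum of A cards bounded by forest edge count
  have hsum : ∑ c : G'.ConnectedComponent, (A c).card ≤ Fg.edgeFinset.card := by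
    rw [← Finset.card_biUnion hdisj]
    apply Finset.card_le_card
    intro e he
    rw [Finset.mem_biUnion] at he
    obtain ⟨c, _, hc⟩ := he
    rw [hA] at hc
    exact (Finset.mem_filter.mp hc).1
  -- total size of components
  have hsupp_eq : ∀ c : G'.ConnectedComponent,
      c.supp = ↑(univ.filter (fun u : ↥Vo => G'.connectedComponentMk u = c)) := by
    intro c
    ext u
    simp [ConnectedComponent.mem_supp_iff]
  have hsupp : ∑ c : G'.ConnectedComponent, (Subtype.val '' c.supp).ncard
      = Fintype.card V - X.card := by
    have h1 : ∀ c : G'.ConnectedComponent, (Subtype.val '' c.supp).ncard = c.supp.ncard :=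
      fun c => Set.ncard_image_of_injective _ Subtype.val_injective
    have h2 : ∀ c : G'.ConnectedComponent,
        c.supp.ncard = (univ.filter (fun u : ↥Vo => G'.connectedComponentMk u = c)).card := by
      intro c
      rw [hsupp_eq c, Set.ncard_coe_finset]
    have h3 := Finset.card_eq_sum_card_fiberwise
      (f := fun u : ↥Vo => G'.connectedComponentMk u) (s := univ) (t := univ)
      (fun x _ => Finset.mem_univ _)
    have h4 : Fintype.card ↥Vo = Fintype.card V - X.card := by
      calc Fintype.card ↥Vo = Fintype.card {u : V // u ∉ X} :=
            Fintype.card_congr (Equiv.refl _)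
        _ = Fintype.card V - Fintype.card {u : V // u ∈ X} := Fintype.card_subtype_compl _
        _ = Fintype.card V - X.card := by rw [Fintype.card_coe]
    calc ∑ c : G'.ConnectedComponent, (Subtype.val '' c.supp).ncard
        = ∑ c : G'.ConnectedComponent,
          (univ.filter (fun u : ↥Vo => G'.connectedComponentMk u = c)).card := by
          exact Finset.sum_congr rfl (fun c _ => (h1 c).trans (h2 c))
      _ = (univ : Finset ↥Vo).card := h3.symm
      _ = Fintype.card ↥Vo := Finset.card_univ
      _ = Fintype.card V - X.card := h4
  have hmin1 : ∀ c : G'.ConnectedComponent, 1 ≤ (Subtype.val '' c.supp).ncard := by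
    intro c
    obtain ⟨w, hw⟩ := c.exists_rep
    have hmem : (w : V) ∈ Subtype.val '' c.supp :=
      ⟨w, (ConnectedComponent.mem_supp_iff _ _).mpr hw, rfl⟩
    exact (Set.ncard_pos (Set.toFinite _)).mpr ⟨_, hmem⟩
  -- ac takes values 1 or 2
  have haceq : ∀ c : G'.ConnectedComponent,
      {x : V | x ∈ X ∧ ∃ u ∈ Subtype.val '' c.supp, G.Adj x u}.ncard = ac c := by
    intro c
    have hset : {x : V | x ∈ X ∧ ∃ u ∈ Subtype.val '' c.supp, G.Adj x u}
        = ↑(X.filter (fun x => ∃ u ∈ Subtype.val '' c.supp, G.Adj x u)) := by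
      ext x
      simp
    rw [hset, Set.ncard_coe_finset, hac]
  have hac12 : ∀ c : G'.ConnectedComponent, ac c = 1 ∨ ac c = 2 := by
    intro c
    have := (hcomp c).2.2
    rw [haceq c] at this
    exact this
  have hqf : q = (univ.filter (fun c : G'.ConnectedComponent => ac c = 2)).card := by
    rw [hq, Nat.card_eq_fintype_card, Fintype.card_subtype]
    congr 1
    apply Finset.filter_congr
    intro c _
    simp only [haceq c]
  have hacsum : ∑ c : G'.ConnectedComponent, ac c
      = Fintype.card G'.ConnectedComponent + q := by
    have hite : ∀ c ∈ (univ : Finset G'.ConnectedComponent),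
        ac c = (if ac c = 2 then 2 else 1) := by
      intro c _
      rcases hac12 c with h | h <;> simp [h]
    rw [Finset.sum_congr rfl hite, Finset.sum_ite, Finset.sum_const, Finset.sum_const]
    have hsplit := Finset.card_filter_add_card_filter_not
      (s := (univ : Finset G'.ConnectedComponent)) (p := fun c => ac c = 2)
    rw [← hqf] at hsplit ⊢
    rw [← Finset.card_univ]
    simp only [smul_eq_mul] at *
    omega
  -- key inequality
  have hkey : (Fintype.card V - X.card) + q ≤ Fg.edgeFinset.card := by
    have hle := Finset.sum_le_sum (fun c (_ : c ∈ univ) => hA_le c)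
    rw [Finset.sum_add_distrib] at hle
    have hshift : ∑ c : G'.ConnectedComponent, ((Subtype.val '' c.supp).ncard - 1)
        + Fintype.card G'.ConnectedComponent
        = ∑ c : G'.ConnectedComponent, (Subtype.val '' c.supp).ncard := by
      rw [← Finset.card_univ, Finset.card_eq_sum_ones, ← Finset.sum_add_distrib]
      exact Finset.sum_congr rfl (fun c _ => by have := hmin1 c; omega)
    rw [hsupp] at hshift
    rw [hacsum] at hle
    omega
  -- global bounds
  have hE1 : Fintype.card V ≤ G.edgeFinset.card + 1 := conn_card_le hconn
  have hNE : Nonempty V := ⟨v⟩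
  have hE2 : Fg.edgeFinset.card + 1 ≤ Fintype.card V := acyclic_card_le hforest
  have hEm : G.edgeFinset.card ≤ ∑ e ∈ G.edgeFinset, m e := by
    calc G.edgeFinset.card = ∑ _e ∈ G.edgeFinset, 1 := by rw [Finset.card_eq_sum_ones]
      _ ≤ ∑ e ∈ G.edgeFinset, m e := Finset.sum_le_sum hm
  have hXn : X.card ≤ Fintype.card V := by
    rw [← Finset.card_univ]
    exact Finset.card_le_card (Finset.subset_univ X)
  have hX1 : 1 ≤ X.card := Finset.card_pos.mpr ⟨v, hv⟩
  have hpart : {e ∈ G.edgeSet | ∀ u ∈ e, u ∈ X}.ncard + Fg.edgeFinset.card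
      = G.edgeFinset.card := by
    have h1 : {e ∈ G.edgeSet | ∀ u ∈ e, u ∈ X}
        = ↑(G.edgeFinset.filter (fun e => ∀ u ∈ e, u ∈ X)) := by
      ext e
      simp [Set.mem_setOf_eq, mem_edgeFinset]
    have h2 : Fg.edgeFinset = G.edgeFinset.filter (fun e => ¬ ∀ u ∈ e, u ∈ X) := by
      ext e
      simp only [mem_edgeFinset, Finset.mem_filter, hFg, edgeSet_deleteEdges,
        Set.mem_diff, hS, Set.mem_setOf_eq]
    rw [h1, Set.ncard_coe_finset, h2, Finset.card_filter_add_card_filter_not]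
  constructor
  · omega
  · omega
end

section
/- Let G be a connected graph and X ⊆ V(G) a set containing both endpoints of every edge of some feedback edge set of G. Then no two connected components of G - X can each have two or more neighbors among a common pair of vertices of X; formally, no two distinct components of the forest G - E(G[X]) restricted outside X can both contain paths between the same two vertices of X. -/
open SimpleGraph

/-- Any walk in `G` from `x` to `y` with `x ≠ y` contains an edge incident to `x`. -/
lemma walk_exists_edge_at_start {V : Type*} {G : SimpleGraph V} {x y : V}
    (p : G.Walk x y) (hxy : x ≠ y) : ∃ z, s(x, z) ∈ p.edges := by
  cases p with
  | nil => exact absurd rfl hxy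
  | cons h q =>
    exact ⟨_, by rw [SimpleGraph.Walk.edges_cons]; exact List.mem_cons_self⟩

/-- Let `G` be connected and let `X` contain both endpoints of every edge of
some feedback edge set `S` of `G`. Then no two distinct connected components of `G - X` can
both be attached (via an edge) to a common pair of distinct vertices of `X`: otherwise a cycle
avoiding the edges inside `X` would arise. -/
theorem stmt5 {V : Type*} [Fintype V] [DecidableEq V]
    (G : SimpleGraph V) (hconn : G.Connected)
    (S : Set (Sym2 V)) (hSE : S ⊆ G.edgeSet)
    (hac : (G.deleteEdges S).IsAcyclic)
    (X : Finset V) (hend : ∀ e ∈ S, ∀ u ∈ e, u ∈ X) :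
    ∀ c d : (G.induce {u : V | u ∉ X}).ConnectedComponent, c ≠ d →
      ∀ x ∈ X, ∀ y ∈ X, x ≠ y →
        ¬((∃ u : {u : V | u ∉ X},
              (G.induce {u : V | u ∉ X}).connectedComponentMk u = c ∧ G.Adj x u.1) ∧
          (∃ u : {u : V | u ∉ X},
              (G.induce {u : V | u ∉ X}).connectedComponentMk u = c ∧ G.Adj y u.1) ∧
          (∃ u : {u : V | u ∉ X},
              (G.induce {u : V | u ∉ X}).connectedComponentMk u = d ∧ G.Adj x u.1) ∧
          (∃ u : {u : V | u ∉ X},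
              (G.induce {u : V | u ∉ X}).connectedComponentMk u = d ∧ G.Adj y u.1)) := by
  rintro c d hcd x hx y hy hxy ⟨⟨u₁, hu₁c, hxu₁⟩, ⟨u₂, hu₂c, hyu₂⟩, ⟨u₃, hu₃d, hxu₃⟩,
    ⟨u₄, hu₄d, hyu₄⟩⟩
  -- an edge with an endpoint outside X is not in S
  have hnotS : ∀ (a b : V), a ∉ X → s(a, b) ∉ S := by
    intro a b ha hS
    exact ha (hend _ hS a (by simp))
  -- build a walk from x to y through a component, in G.deleteEdges S
  have key : ∀ (u v : {u : V | u ∉ X}),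
      (G.induce {u : V | u ∉ X}).connectedComponentMk u =
        (G.induce {u : V | u ∉ X}).connectedComponentMk v → G.Adj x u.1 → G.Adj v.1 y →
      ∃ W : (G.deleteEdges S).Walk x y,
        ∀ z : V, s(x, z) ∈ W.edges → z = u.1 := by
    intro u v huv hadjx hadjy
    obtain ⟨w⟩ := (SimpleGraph.ConnectedComponent.eq).mp huv
    -- map the walk into G
    set w' : G.Walk u.1 v.1 :=
      w.map (SimpleGraph.Embedding.induce {u : V | u ∉ X}).toHom with hw'
    have hsupp : ∀ z ∈ w'.support, z ∉ X := by
      intro z hz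
      replace hz : z ∈ (w.map (SimpleGraph.Embedding.induce {u : V | u ∉ X}).toHom).support := hz
      rw [SimpleGraph.Walk.support_map] at hz
      obtain ⟨⟨z', hz'⟩, _, rfl⟩ := List.mem_map.mp hz
      exact hz'
    have hw'S : ∀ e ∈ w'.edges, e ∉ S := by
      intro e he
      induction e with
      | h a b =>
        exact hnotS a b (hsupp a (w'.fst_mem_support_of_mem_edges he))
    set W : G.Walk x y := SimpleGraph.Walk.cons hadjx (w'.concat hadjy) with hW
    have hWS : ∀ e ∈ W.edges, e ∉ S := by
      intro e he
      rw [hW, SimpleGraph.Walk.edges_cons, SimpleGraph.Walk.edges_concat] at he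
      simp only [List.concat_eq_append, List.mem_cons, List.mem_append,
        List.mem_singleton, List.not_mem_nil, or_false] at he
      rcases he with rfl | he | rfl
      · intro hS; exact u.2 (hend _ hS u.1 (by simp))
      · exact hw'S e he
      · intro hS; exact v.2 (hend _ hS v.1 (by simp))
    refine ⟨W.toDeleteEdges S hWS, ?_⟩
    intro z hz
    have hz' : s(x, z) ∈ W.edges := by
      rwa [SimpleGraph.Walk.edges_transfer] at hz
    rw [hW, SimpleGraph.Walk.edges_cons, SimpleGraph.Walk.edges_concat] at hz'
    simp only [List.concat_eq_append, List.mem_cons, List.mem_append,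
      List.mem_singleton, List.not_mem_nil, or_false] at hz'
    rcases hz' with h | h | h
    · rcases Sym2.eq_iff.mp h with ⟨_, rfl⟩ | ⟨h1, h2⟩
      · rfl
      · exact absurd hx (h1 ▸ u.2)
    · exact absurd hx (hsupp x (w'.fst_mem_support_of_mem_edges h))
    · rcases Sym2.eq_iff.mp h with ⟨h1, _⟩ | ⟨h2, _⟩
      · exact absurd hx (h1 ▸ v.2)
      · exact absurd h2 hxy
  obtain ⟨W₁, hW₁⟩ := key u₁ u₂ (hu₁c.trans hu₂c.symm) hxu₁ hyu₂.symm
  obtain ⟨W₂, hW₂⟩ := key u₃ u₄ (hu₃d.trans hu₄d.symm) hxu₃ hyu₄.symm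
  have hP : W₁.toPath = W₂.toPath := hac.path_unique _ _
  obtain ⟨z, hz⟩ := walk_exists_edge_at_start (W₁.toPath : (G.deleteEdges S).Walk x y) hxy
  have hz₁ : z = u₁.1 := hW₁ z (W₁.edges_bypass_subset hz)
  have hz₂ : z = u₃.1 := by
    rw [hP] at hz
    exact hW₂ z (W₂.edges_bypass_subset hz)
  have h13 : u₁ = u₃ := Subtype.ext (hz₁ ▸ hz₂)
  cases h13
  exact hcd (hu₁c.symm.trans hu₃d)
end

section
/- Let 𝒯 be a temporal graph whose underlying graph T is a tree where each edge appears in exactly one snapshot, and let x ∈ V(T). Then the set of vertices visitable by some monotone closed (x,x)-walk equals ∪_{t=1}^{L} V(C_t), where C_t is the connected component of F_t containing x; consequently, the maximum total weight over monotone (x,x)-walks, for any positive weight function w on V(T), equals w(∪_{t} V(C_t)). -/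
open scoped BigOperators

open SimpleGraph

namespace Stmt8Aux

variable {V : Type*}

lemma cover_list (H : SimpleGraph V) (x : V) (l : List V)
    (hl : ∀ v ∈ l, H.Reachable x v) :
    ∃ W : H.Walk x x, ∀ v ∈ l, v ∈ W.support := by
  induction l with
  | nil => exact ⟨Walk.nil, by simp⟩
  | cons a l ih =>
    obtain ⟨W', hW'⟩ := ih (fun v hv => hl v (List.mem_cons_of_mem _ hv))
    obtain ⟨p⟩ := hl a List.mem_cons_self
    refine ⟨(p.append p.reverse).append W', ?_⟩
    intro v hv
    rcases List.mem_cons.mp hv with rfl | hv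
    · rw [Walk.mem_support_append_iff, Walk.mem_support_append_iff]
      exact Or.inl (Or.inl p.end_mem_support)
    · rw [Walk.mem_support_append_iff]
      exact Or.inr (hW' v hv)

lemma cover [Fintype V] (H : SimpleGraph V) (x : V) :
    ∃ W : H.Walk x x, ∀ v ∈ (H.connectedComponentMk x).supp, v ∈ W.support := by
  classical
  have hfin : (H.connectedComponentMk x).supp.Finite := Set.toFinite _
  have hl : ∀ v ∈ hfin.toFinset.toList, H.Reachable x v := by
    intro v hv
    have hv' := (ConnectedComponent.mem_supp_iff _ _).mp
      (hfin.mem_toFinset.mp (Finset.mem_toList.mp hv))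
    exact (ConnectedComponent.eq.mp hv').symm
  obtain ⟨W, hW⟩ := cover_list H x hfin.toFinset.toList hl
  exact ⟨W, fun v hv => hW v (Finset.mem_toList.mpr (hfin.mem_toFinset.mpr hv))⟩

lemma build [Fintype V] {L : ℕ} (F : Fin L → SimpleGraph V) (x : V) (n : ℕ) (hn : n ≤ L) :
    ∃ (W : (⨆ t, F t).Walk x x) (τ : Fin W.edges.length → Fin L),
      Monotone τ ∧ (∀ i, W.edges.get i ∈ (F (τ i)).edgeSet) ∧ (∀ i, (τ i : ℕ) < n) ∧
      ∀ t : Fin L, (t : ℕ) < n →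
        ∀ v ∈ ((F t).connectedComponentMk x).supp, v ∈ W.support := by
  induction n with
  | zero =>
    refine ⟨Walk.nil, fun i => absurd i.2 (by simp), ?_, ?_, ?_, ?_⟩
    · intro i
      exact absurd i.2 (by simp)
    · intro i
      exact absurd i.2 (by simp)
    · intro i
      exact absurd i.2 (by simp)
    · intro t ht
      omega
  | succ n ih =>
    have hnL : n < L := hn
    obtain ⟨Wn, τn, hmono, hedge, hlt, hcov⟩ := ih (le_of_lt hnL)
    set t : Fin L := ⟨n, hnL⟩ with ht
    obtain ⟨C, hC⟩ := cover (F t) x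
    have hle : ∀ e ∈ C.edges, e ∈ (⨆ s, F s).edgeSet := fun e he =>
      edgeSet_mono (le_iSup F t) (C.edges_subset_edgeSet he)
    refine ⟨Wn.append (C.transfer _ hle), ?_⟩
    set C' : (⨆ s, F s).Walk x x := C.transfer _ hle with hC'
    have hE : (Wn.append C').edges = Wn.edges ++ C'.edges := Walk.edges_append _ _
    refine ⟨fun i => if h : (i : ℕ) < Wn.edges.length then τn ⟨i, h⟩ else t, ?_, ?_, ?_, ?_⟩
    · intro i j hij
      have hij' : (i : ℕ) ≤ (j : ℕ) := hij
      dsimp only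
      split_ifs with h1 h2 h2
      · exact hmono (show (⟨(i : ℕ), h1⟩ : Fin _) ≤ ⟨(j : ℕ), h2⟩ from hij')
      · exact Fin.le_def.mpr (le_of_lt (hlt ⟨(i : ℕ), h1⟩))
      · omega
      · exact le_refl t
    · intro i
      dsimp only
      have hilen : (i : ℕ) < (Wn.edges ++ C'.edges).length := hE ▸ i.2
      have hg : (Wn.append C').edges.get i = (Wn.edges ++ C'.edges)[(i : ℕ)]'hilen := by
        rw [List.get_eq_getElem]
        exact List.getElem_of_eq hE i.2
      split_ifs with h
      · rw [hg, List.getElem_append_left h]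
        have := hedge ⟨(i : ℕ), h⟩
        rwa [List.get_eq_getElem] at this
      · rw [hg, List.getElem_append_right (Nat.le_of_not_lt h)]
        have hsub : ∀ e ∈ C'.edges, e ∈ (F t).edgeSet := by
          rw [hC', Walk.edges_transfer]
          exact fun e he => C.edges_subset_edgeSet he
        exact hsub _ (List.getElem_mem _)
    · intro i
      dsimp only
      split_ifs with h
      · exact Nat.lt_succ_of_lt (hlt ⟨(i : ℕ), h⟩)
      · exact Nat.lt_succ_self n
    · intro s hs v hv
      rw [Walk.mem_support_append_iff]
      by_cases h : (s : ℕ) < n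
      · exact Or.inl (hcov s h v hv)
      · have : s = t := Fin.ext (show (s : ℕ) = n by omega)
        subst this
        right
        rw [hC', Walk.support_transfer]
        exact hC v hv

lemma hard [Fintype V] {L : ℕ} (hL : 0 < L) (F : Fin L → SimpleGraph V)
    (htree : (⨆ t, F t).IsTree)
    (huniq : ∀ e ∈ (⨆ t, F t).edgeSet, ∃! t : Fin L, e ∈ (F t).edgeSet)
    (x v : V) (W : (⨆ t, F t).Walk x x) (τ : Fin W.edges.length → Fin L)
    (hmono : Monotone τ) (hedge : ∀ i, W.edges.get i ∈ (F (τ i)).edgeSet)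
    (hv : v ∈ W.support) : ∃ t : Fin L, (F t).Reachable x v := by
  classical
  by_cases hvx : v = x
  · subst hvx
    exact ⟨⟨0, hL⟩, Reachable.refl v⟩
  set time : Sym2 V → Fin L := fun e =>
    if h : e ∈ (⨆ t, F t).edgeSet then (huniq e h).choose else ⟨0, hL⟩ with htime
  have htime1 : ∀ e, e ∈ (⨆ t, F t).edgeSet → e ∈ (F (time e)).edgeSet := by
    intro e h
    simp only [htime, dif_pos h]
    exact (huniq e h).choose_spec.1
  have htime2 : ∀ e, e ∈ (⨆ t, F t).edgeSet →
      ∀ s : Fin L, e ∈ (F s).edgeSet → s = time e := by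
    intro e h s hs
    simp only [htime, dif_pos h]
    exact (huniq e h).choose_spec.2 s hs
  have hτ : ∀ i : Fin W.edges.length, τ i = time (W.edges.get i) := fun i =>
    htime2 _ (W.edges_subset_edgeSet (W.edges.get_mem _)) _ (hedge i)
  set W₁ := W.takeUntil v hv with hW₁
  set W₂ := W.dropUntil v hv with hW₂
  have hsplit : W₁.append W₂ = W := W.take_spec hv
  have hEsplit : W₁.edges ++ W₂.edges = W.edges := by
    rw [← Walk.edges_append, hsplit]
  have key : ∀ e ∈ W₁.edges, ∀ f ∈ W₂.edges, time e ≤ time f := by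
    intro e he f hf
    obtain ⟨i, hi, hie⟩ := List.getElem_of_mem he
    obtain ⟨j, hj, hjf⟩ := List.getElem_of_mem hf
    have hilen : i < W.edges.length := by
      rw [← hEsplit, List.length_append]; omega
    have hjlen : W₁.edges.length + j < W.edges.length := by
      rw [← hEsplit, List.length_append]; omega
    have e1 : W.edges.get ⟨i, hilen⟩ = e := by
      rw [List.get_eq_getElem, List.getElem_of_eq hEsplit.symm hilen,
        List.getElem_append_left hi]
      exact hie
    have e2 : W.edges.get ⟨W₁.edges.length + j, hjlen⟩ = f := by
      rw [List.get_eq_getElem, List.getElem_of_eq hEsplit.symm hjlen,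
        List.getElem_append_right (Nat.le_add_right _ _)]
      have hjj : W₁.edges.length + j - W₁.edges.length = j := by omega
      simp only [hjj]
      exact hjf
    have h1 : time e = τ ⟨i, hilen⟩ := by rw [hτ, e1]
    have h2 : time f = τ ⟨W₁.edges.length + j, hjlen⟩ := by rw [hτ, e2]
    rw [h1, h2]
    exact hmono (Fin.mk_le_mk.mpr (by omega))
  have hP1path : W₁.bypass.IsPath := Walk.bypass_isPath _
  have hP2path : W₂.reverse.bypass.IsPath := Walk.bypass_isPath _
  have hPeq : W₁.bypass = W₂.reverse.bypass := by
    have := htree.IsAcyclic.path_unique ⟨W₁.bypass, hP1path⟩ ⟨W₂.reverse.bypass, hP2path⟩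
    exact congrArg Subtype.val this
  have hPe1 : ∀ e ∈ W₁.bypass.edges, e ∈ W₁.edges := fun e he =>
    Walk.edges_bypass_subset _ he
  have hPe2 : ∀ e ∈ W₁.bypass.edges, e ∈ W₂.edges := by
    intro e he
    rw [hPeq] at he
    have := Walk.edges_bypass_subset _ he
    rw [Walk.edges_reverse] at this
    exact List.mem_reverse.mp this
  have hPne : W₁.bypass.edges ≠ [] := by
    intro h
    exact hvx (Walk.eq_of_length_eq_zero (by rw [← Walk.length_edges, h]; rfl)).symm
  obtain ⟨e₀, he₀⟩ := List.exists_mem_of_ne_nil W₁.bypass.edges hPne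
  refine ⟨time e₀, ⟨W₁.bypass.transfer (F (time e₀)) ?_⟩⟩
  intro e he
  have hme : e ∈ (⨆ t, F t).edgeSet :=
    W.edges_subset_edgeSet (by rw [← hEsplit]; exact List.mem_append_left _ (hPe1 e he))
  have h1 : time e ≤ time e₀ := key e (hPe1 e he) e₀ (hPe2 e₀ he₀)
  have h2 : time e₀ ≤ time e := key e₀ (hPe1 e₀ he₀) e (hPe2 e he)
  have heq : time e = time e₀ := le_antisymm h1 h2
  rw [← heq]
  exact htime1 e hme

end Stmt8Aux

/-- Let `𝒯 = (F_1, …, F_L)` be a temporal graph whose underlying graph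
`T = ⨆ t, F t` is a tree in which every edge appears in exactly one snapshot, and `x` a
vertex. Then the set of vertices visitable by a monotone closed `(x,x)`-walk equals
`⋃_t V(C_t)` where `C_t` is the connected component of `F_t` containing `x`; consequently,
for any positive weight function `w`, the maximum total weight over monotone `(x,x)`-walks
equals `w(⋃_t V(C_t))`. -/
theorem stmt8 {V : Type*} [Fintype V] [DecidableEq V] {L : ℕ} (hL : 0 < L)
    (F : Fin L → SimpleGraph V) (htree : (⨆ t, F t).IsTree)
    (huniq : ∀ e ∈ (⨆ t, F t).edgeSet, ∃! t : Fin L, e ∈ (F t).edgeSet)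
    (x : V) (w : V → ℕ) (hw : ∀ u, 0 < w u) :
    ({v : V | ∃ (W : (⨆ t, F t).Walk x x) (τ : Fin W.edges.length → Fin L),
        Monotone τ ∧ (∀ i, W.edges.get i ∈ (F (τ i)).edgeSet) ∧ v ∈ W.support}
      = ⋃ t : Fin L, ((F t).connectedComponentMk x).supp) ∧
    IsGreatest {n : ℕ | ∃ (W : (⨆ t, F t).Walk x x) (τ : Fin W.edges.length → Fin L),
        Monotone τ ∧ (∀ i, W.edges.get i ∈ (F (τ i)).edgeSet) ∧
        n = ∑ᶠ u ∈ {v : V | v ∈ W.support}, w u}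
      (∑ᶠ u ∈ ⋃ t : Fin L, ((F t).connectedComponentMk x).supp, w u) := by
  classical
  obtain ⟨Wm, τm, hmonom, hedgem, _, hcovm⟩ := Stmt8Aux.build F x L le_rfl
  have hset : {v : V | ∃ (W : (⨆ t, F t).Walk x x) (τ : Fin W.edges.length → Fin L),
      Monotone τ ∧ (∀ i, W.edges.get i ∈ (F (τ i)).edgeSet) ∧ v ∈ W.support}
      = ⋃ t : Fin L, ((F t).connectedComponentMk x).supp := by
    ext v
    constructor
    · rintro ⟨W, τ, hm, he, hvW⟩
      obtain ⟨t, ht⟩ := Stmt8Aux.hard hL F htree huniq x v W τ hm he hvW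
      exact Set.mem_iUnion.mpr ⟨t, (ConnectedComponent.mem_supp_iff _ _).mpr
        (ConnectedComponent.sound ht.symm)⟩
    · intro hv
      obtain ⟨t, ht⟩ := Set.mem_iUnion.mp hv
      exact ⟨Wm, τm, hmonom, hedgem, hcovm t t.2 v ht⟩
  have hWmsupp : {v : V | v ∈ Wm.support}
      = ⋃ t : Fin L, ((F t).connectedComponentMk x).supp := by
    ext v
    constructor
    · intro hv
      have : v ∈ {v : V | ∃ (W : (⨆ t, F t).Walk x x) (τ : Fin W.edges.length → Fin L),
          Monotone τ ∧ (∀ i, W.edges.get i ∈ (F (τ i)).edgeSet) ∧ v ∈ W.support} :=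
        ⟨Wm, τm, hmonom, hedgem, hv⟩
      rwa [hset] at this
    · intro hv
      obtain ⟨t, ht⟩ := Set.mem_iUnion.mp hv
      exact hcovm t t.2 v ht
  refine ⟨hset, ⟨Wm, τm, hmonom, hedgem, by rw [hWmsupp]⟩, ?_⟩
  rintro n ⟨W, τ, hm, he, rfl⟩
  have hsub : {v : V | v ∈ W.support} ⊆ ⋃ t : Fin L, ((F t).connectedComponentMk x).supp := by
    intro v hv
    have : v ∈ {v : V | ∃ (W : (⨆ t, F t).Walk x x) (τ : Fin W.edges.length → Fin L),
        Monotone τ ∧ (∀ i, W.edges.get i ∈ (F (τ i)).edgeSet) ∧ v ∈ W.support} :=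
      ⟨W, τ, hm, he, hv⟩
    rwa [hset] at this
  have hS := Set.toFinite {v : V | v ∈ W.support}
  have hU := Set.toFinite (⋃ t : Fin L, ((F t).connectedComponentMk x).supp)
  calc ∑ᶠ u ∈ {v : V | v ∈ W.support}, w u
      = ∑ u ∈ hS.toFinset, w u := by
        rw [← finsum_mem_coe_finset, hS.coe_toFinset]
    _ ≤ ∑ u ∈ hU.toFinset, w u := by
        refine Finset.sum_le_sum_of_subset ?_
        intro u hu
        rw [Set.Finite.mem_toFinset] at hu ⊢
        exact hsub hu
    _ = ∑ᶠ u ∈ ⋃ t : Fin L, ((F t).connectedComponentMk x).supp, w u := by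
        rw [← finsum_mem_coe_finset, hU.coe_toFinset]
end

section
/- Let G be a connected graph with a feedback edge set of size at most p. Form the multigraph G'' from an induced subgraph G[X] (where X contains both endpoints of all feedback edges) by adding, for each connected component of G - X attached to exactly two vertices x, y of X, one (possibly parallel) edge xy. Then G'' has at most |X| - 1 + p edges. -/
open SimpleGraph Walk

/-- Let `G` be connected with a feedback edge set `S` of size at most `p`
whose endpoints all lie in `X`. Form the multigraph `G''` from `G[X]` by adding one (possibly
parallel) edge `xy` for every connected component of `G - X` attached to exactly two vertices
`x, y` of `X`. Then `G''` has at most `|X| - 1 + p` edges; that is, the number of edges of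
`G[X]` plus the number `q` of such components is at most `|X| - 1 + p`. -/
theorem stmt12 {V : Type*} [Fintype V] [DecidableEq V]
    (G : SimpleGraph V) (hconn : G.Connected)
    (S : Set (Sym2 V)) (hSE : S ⊆ G.edgeSet)
    (hac : (G.deleteEdges S).IsAcyclic)
    {p : ℕ} (hSp : S.ncard ≤ p)
    (X : Finset V) (hend : ∀ e ∈ S, ∀ u ∈ e, u ∈ X) :
    {e ∈ G.edgeSet | ∀ u ∈ e, u ∈ X}.ncard
      + Nat.card {c : (G.induce {u : V | u ∉ X}).ConnectedComponent //
          {x : V | x ∈ X ∧ ∃ u : {u : V | u ∉ X},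
            (G.induce {u : V | u ∉ X}).connectedComponentMk u = c ∧ G.Adj x u.1}.ncard = 2}
      ≤ X.card - 1 + p := by
  classical
  set T := G.deleteEdges S with hTdef
  have hTadj : ∀ {a b : V}, G.Adj a b → a ∉ X → T.Adj a b := by
    intro a b hab ha
    rw [hTdef, deleteEdges_adj]
    exact ⟨hab, fun hS => ha (hend _ hS a (Sym2.mem_mk_left a b))⟩
  by_cases hX : X.Nonempty
  swap
  · -- X is empty
    rw [Finset.not_nonempty_iff_eq_empty] at hX
    subst hX
    have hA : {e ∈ G.edgeSet | ∀ u ∈ e, u ∈ (∅ : Finset V)}.ncard = 0 := by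
      rw [Set.ncard_eq_zero]
      ext e
      simp only [Set.mem_setOf_eq, Set.mem_empty_iff_false, iff_false, not_and]
      intro he h
      induction e using Sym2.ind with
      | _ a b => exact absurd (h a (Sym2.mem_mk_left a b)) (Finset.notMem_empty a)
    have hQ : Nat.card {c : (G.induce {u : V | u ∉ (∅ : Finset V)}).ConnectedComponent //
          {x : V | x ∈ (∅ : Finset V) ∧ ∃ u : {u : V | u ∉ (∅ : Finset V)},
            (G.induce {u : V | u ∉ (∅ : Finset V)}).connectedComponentMk u = c ∧ G.Adj x u.1}.ncard = 2} = 0 := by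
      rw [Nat.card_eq_zero]
      left
      refine ⟨fun c => ?_⟩
      have : {x : V | x ∈ (∅ : Finset V) ∧ ∃ u : {u : V | u ∉ (∅ : Finset V)},
            (G.induce {u : V | u ∉ (∅ : Finset V)}).connectedComponentMk u = c.1 ∧ G.Adj x u.1} = ∅ := by
        ext x
        simp
      have h2 := c.2
      rw [this] at h2
      simp at h2
    rw [hA, hQ]
    omega
  obtain ⟨x₀, hx₀⟩ := hX
  -- every T-component contains a vertex of X
  have hcomp : ∀ k : T.ConnectedComponent, ∃ z, z ∈ X ∧ T.connectedComponentMk z = k := by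
    intro k
    obtain ⟨v, hv⟩ := k.exists_rep
    obtain ⟨w⟩ := hconn v x₀
    have h : ∃ z ∈ X, T.Reachable v z := by
      clear hv
      induction w with
      | nil => exact ⟨_, hx₀, Reachable.refl _⟩
      | cons h q ih =>
        rename_i a b _
        by_cases hv : a ∈ X
        · exact ⟨a, hv, Reachable.refl _⟩
        · obtain ⟨z, hz, hr⟩ := ih hx₀
          exact ⟨z, hz, (hTadj h hv).reachable.trans hr⟩
    obtain ⟨z, hz, hr⟩ := h
    exact ⟨z, hz, by rw [← hv]; exact ConnectedComponent.sound hr.symm⟩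
  choose rt hrtX hrtk using hcomp
  set root : V → V := fun v => rt (T.connectedComponentMk v) with hrootdef
  have hrooteq : ∀ {a b : V}, T.Reachable a b → root a = root b := by
    intro a b h
    simp only [hrootdef]
    rw [ConnectedComponent.sound h]
  have hrootreach : ∀ v, T.Reachable v (root v) := fun v =>
    (ConnectedComponent.exact (hrtk (T.connectedComponentMk v))).symm
  have hpath : ∀ v : V, ∃ q : T.Walk v (root v), q.IsPath := fun v =>
    (hrootreach v).elim fun w => ⟨w.bypass, w.bypass_isPath⟩
  choose π hπ using hpath
  set d : V → ℕ := fun v => (π v).length with hddef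
  set par : V → V := fun v => (π v).getVert 1 with hpardef
  have huniq : ∀ {a b : V} (q r : T.Walk a b), q.IsPath → r.IsPath → q = r := by
    intro a b q r hq hr
    exact Subtype.mk_eq_mk.mp (hac.path_unique ⟨q, hq⟩ ⟨r, hr⟩)
  -- membership in the canonical path decreases d
  have hmem_lt : ∀ {a b : V} (h : a ∈ (π b).support), a ≠ b → d a < d b := by
    intro a b h hne
    have hr : root a = root b := hrooteq ((π b).takeUntil a h).reverse.reachable
    have hq : (((π b).dropUntil a h).copy rfl hr.symm) = π a :=
      huniq _ _ (by rw [isPath_copy]; exact (hπ b).dropUntil h) (hπ a)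
    have hda : d a = ((π b).dropUntil a h).length := by
      rw [hddef]
      simp only [← hq, length_copy]
    have hlen := congrArg Walk.length ((π b).take_spec h)
    rw [length_append] at hlen
    have htu : ((π b).takeUntil a h).length ≠ 0 := by
      intro h0
      exact hne (Walk.eq_of_length_eq_zero h0).symm
    have hdb : d b = ((π b).takeUntil a h).length + ((π b).dropUntil a h).length := by
      simp only [hddef]
      omega
    omega
  have hcons : ∀ {a b : V} (hadj : T.Adj a b), a ∉ (π b).support →
      d a = d b + 1 ∧ par a = b := by
    intro a b hadj hna
    have hr : root b = root a := hrooteq hadj.symm.reachable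
    have hp : ((Walk.cons hadj (π b)).copy rfl hr) = π a :=
      huniq _ _ (by rw [isPath_copy]; exact (cons_isPath_iff _ _).mpr ⟨hπ b, hna⟩) (hπ a)
    constructor
    · have := congrArg Walk.length hp
      simp only [length_copy, length_cons] at this
      simp only [hddef]
      omega
    · have := congrArg (fun w => Walk.getVert w 1) hp
      simp only [getVert_copy, getVert_cons_succ, getVert_zero] at this
      simp only [hpardef]
      exact this.symm
  have hstep : ∀ {a b : V}, T.Adj a b → d a = d b + 1 ∨ d b = d a + 1 := by
    intro a b hadj
    by_cases h : a ∈ (π b).support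
    · right
      have h1 : d a < d b := hmem_lt h hadj.ne
      by_cases h2 : b ∈ (π a).support
      · have := hmem_lt h2 hadj.ne.symm
        omega
      · exact (hcons hadj.symm h2).1
    · left; exact (hcons hadj h).1
  have hparu : ∀ {a b : V}, T.Adj a b → d b < d a → par a = b := by
    intro a b hadj hlt
    by_cases h : a ∈ (π b).support
    · have := hmem_lt h hadj.ne
      omega
    · exact (hcons hadj h).2
  have hd_root : ∀ v, v = root v → d v = 0 := by
    intro v hv
    have h : ((Walk.nil : T.Walk v v).copy rfl hv) = π v :=
      huniq _ _ (by rw [isPath_copy]; exact IsPath.nil) (hπ v)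
    have := congrArg Walk.length h
    simp only [length_copy, length_nil] at this
    simp only [hddef]
    omega
  have hparent : ∀ v, 0 < d v → T.Adj v (par v) ∧ d (par v) + 1 = d v := by
    intro v hv
    have hne : v ≠ root v := by
      intro h
      have := hd_root v h
      omega
    obtain ⟨b, hadj, q, heq⟩ := Walk.exists_eq_cons_of_ne hne (π v)
    have hparb : par v = b := by
      simp only [hpardef, heq, getVert_cons_succ, getVert_zero]
    have hqpath : q.IsPath := by
      have := hπ v
      rw [heq, cons_isPath_iff] at this
      exact this.1
    have hr : root v = root b := hrooteq hadj.reachable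
    have hq : (q.copy rfl hr) = π b :=
      huniq _ _ (by rw [isPath_copy]; exact hqpath) (hπ b)
    have hdb : d b = q.length := by
      simp only [hddef, ← hq, length_copy]
    have hdv : d v = q.length + 1 := by
      simp only [hddef, heq, length_cons]
    rw [hparb]
    exact ⟨hadj, by omega⟩
  -- climbing lemma
  have hclimb : ∀ {a b : V} (P : T.Walk a b), P.IsPath → 0 < P.length →
      d (P.getVert 1) = d a + 1 → d a < d b := by
    intro a b P
    induction P with
    | nil => intro _ h _; simp at h
    | cons hadj q ih =>
      rename_i a c b
      intro hP hl h1
      have hq : q.IsPath := (cons_isPath_iff _ _).mp hP |>.1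
      have hna : a ∉ q.support := (cons_isPath_iff _ _).mp hP |>.2
      have hc1 : (Walk.cons hadj q).getVert 1 = c := by
        simp [getVert_cons_succ, getVert_zero]
      rw [hc1] at h1
      by_cases hq0 : q.length = 0
      · have hcb : c = b := Walk.eq_of_length_eq_zero hq0
        rw [hcb] at h1
        omega
      · have hql : 0 < q.length := Nat.pos_of_ne_zero hq0
        have hnn : ¬ q.Nil := by rw [nil_iff_length_eq]; omega
        have hadj2 : T.Adj c (q.getVert 1) := by simpa using q.adj_getVert_succ (i := 0) hql
        rcases hstep hadj2 with h2 | h2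
        · exfalso
          have hpc1 : par c = q.getVert 1 := hparu hadj2 (by omega)
          have hpc2 : par c = a := hparu hadj.symm (by omega)
          have hmem : q.getVert 1 ∈ q.support := by
            obtain ⟨u', h', q', hq'⟩ := not_nil_iff.mp hnn
            rw [hq']
            simp [getVert_cons_succ, getVert_zero, support_cons]
          rw [hpc1] at hpc2
          rw [hpc2] at hmem
          exact hna hmem
        · have := ih hq hql h2
          omega
  -- walks inside a component of G - X
  have hcwalk : ∀ (a b : {u : V | u ∉ X}), (G.induce {u : V | u ∉ X}).Reachable a b →
      ∃ w : T.Walk a.1 b.1, ∀ z ∈ w.support, z ∉ X := by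
    intro a b hr
    obtain ⟨w⟩ := hr
    induction w with
    | nil =>
      rename_i a
      exact ⟨Walk.nil, by
        intro z hz
        rw [support_nil, List.mem_singleton] at hz
        rw [hz]; exact a.2⟩
    | cons hadj q ih =>
      rename_i a c b
      obtain ⟨w', hw'⟩ := ih
      have hGa : G.Adj a.1 c.1 := by simpa using hadj
      refine ⟨Walk.cons (hTadj hGa a.2) w', ?_⟩
      intro z hz
      rw [support_cons] at hz
      rcases List.mem_cons.mp hz with h | h
      · rw [h]; exact a.2
      · exact hw' z h
  -- main structural lemma: each 2-attachment component hangs below one of its attachments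
  have hQex : ∀ (c : (G.induce {u : V | u ∉ X}).ConnectedComponent),
      ({x : V | x ∈ X ∧ ∃ u : {u : V | u ∉ X},
        (G.induce {u : V | u ∉ X}).connectedComponentMk u = c ∧ G.Adj x u.1}).ncard = 2 →
      ∃ z, z ∈ X ∧ 0 < d z ∧ ∃ h : par z ∈ {u : V | u ∉ X},
        (G.induce {u : V | u ∉ X}).connectedComponentMk ⟨par z, h⟩ = c := by
    intro c hc
    obtain ⟨x, y, hxy, hatt⟩ := Set.ncard_eq_two.mp hc
    have hx : x ∈ ({x, y} : Set V) := Set.mem_insert _ _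
    have hy : y ∈ ({x, y} : Set V) := Set.mem_insert_iff.mpr (Or.inr rfl)
    rw [← hatt] at hx hy
    obtain ⟨hxX, u, hu, hxu⟩ := hx
    obtain ⟨hyX, v, hv, hyv⟩ := hy
    have hTx : T.Adj x u.1 := (hTadj hxu.symm u.2).symm
    have hTy : T.Adj y v.1 := (hTadj hyv.symm v.2).symm
    have keyx : d u.1 = d x + 1 ∨ (0 < d x ∧ par x = u.1) := by
      rcases hstep hTx with h | h
      · exact Or.inr ⟨by omega, hparu hTx (by omega)⟩
      · exact Or.inl h
    have keyy : d v.1 = d y + 1 ∨ (0 < d y ∧ par y = v.1) := by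
      rcases hstep hTy with h | h
      · exact Or.inr ⟨by omega, hparu hTy (by omega)⟩
      · exact Or.inl h
    rcases keyx with hdx | ⟨hpx, hpux⟩
    · rcases keyy with hdy | ⟨hpy, hpvy⟩
      · exfalso
        have hruv : (G.induce {u : V | u ∉ X}).Reachable u v :=
          ConnectedComponent.exact (hu.trans hv.symm)
        obtain ⟨iw, hiw⟩ := hcwalk u v hruv
        have hiwe : ∀ e ∈ iw.edges, ∀ z ∈ e, z ∉ X := by
          intro e
          induction e using Sym2.ind with
          | _ a b =>
            intro he z hz
            rcases Sym2.mem_iff.mp hz with h | h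
            · rw [h]; exact hiw _ (iw.fst_mem_support_of_mem_edges he)
            · rw [h]; exact hiw _ (iw.snd_mem_support_of_mem_edges he)
        set W : T.Walk x y := Walk.cons hTx (iw.concat hTy.symm) with hW
        have hWedges : W.edges = s(x, u.1) :: (iw.edges ++ [s(v.1, y)]) := by
          rw [hW, edges_cons, edges_concat, List.concat_eq_append]
        have hxy' : x ≠ y := hxy
        have hfirst : ∀ (c' : V), s(x, c') ∈ W.edges → c' = u.1 := by
          intro c' he
          rw [hWedges] at he
          rcases List.mem_cons.mp he with h | h
          · rcases Sym2.eq_iff.mp h with ⟨-, h2⟩ | ⟨h1, -⟩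
            · exact h2
            · exfalso; rw [h1] at hxX; exact u.2 hxX
          · rcases List.mem_append.mp h with h | h
            · exact absurd hxX (hiwe _ h x (Sym2.mem_mk_left _ _))
            · rw [List.mem_singleton] at h
              rcases Sym2.eq_iff.mp h with ⟨h1, -⟩ | ⟨h1, -⟩
              · exfalso; rw [h1] at hxX; exact v.2 hxX
              · exact absurd h1 hxy'
        have hlast : ∀ (c' : V), s(y, c') ∈ W.edges → c' = v.1 := by
          intro c' he
          rw [hWedges] at he
          rcases List.mem_cons.mp he with h | h
          · rcases Sym2.eq_iff.mp h with ⟨h1, -⟩ | ⟨h1, -⟩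
            · exact absurd h1.symm hxy'
            · exfalso; rw [h1] at hyX; exact u.2 hyX
          · rcases List.mem_append.mp h with h | h
            · exact absurd hyX (hiwe _ h y (Sym2.mem_mk_left _ _))
            · rw [List.mem_singleton] at h
              rcases Sym2.eq_iff.mp h with ⟨h1, -⟩ | ⟨-, h2⟩
              · exfalso; rw [h1] at hyX; exact v.2 hyX
              · exact h2
        have hPp : W.bypass.IsPath := W.bypass_isPath
        have hPe : W.bypass.edges ⊆ W.edges := W.edges_bypass_subset
        obtain ⟨c₁, hadj₁, q₁, hq₁⟩ := Walk.exists_eq_cons_of_ne hxy' W.bypass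
        have hc₁ : c₁ = u.1 := hfirst c₁ (hPe (by rw [hq₁, edges_cons]; exact List.mem_cons_self))
        have hd1 : d x < d y := by
          apply hclimb W.bypass hPp
          · rw [hq₁, length_cons]; omega
          · rw [hq₁]
            have hg : (Walk.cons hadj₁ q₁).getVert 1 = c₁ := by
              simp [getVert_cons_succ, getVert_zero]
            rw [hg, hc₁]; exact hdx
        have hPrp : W.bypass.reverse.IsPath := hPp.reverse
        have hPre : W.bypass.reverse.edges ⊆ W.edges := by
          intro e he
          rw [edges_reverse, List.mem_reverse] at he
          exact hPe he
        obtain ⟨c₂, hadj₂, q₂, hq₂⟩ := Walk.exists_eq_cons_of_ne hxy'.symm W.bypass.reverse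
        have hc₂ : c₂ = v.1 := hlast c₂ (hPre (by rw [hq₂, edges_cons]; exact List.mem_cons_self))
        have hd2 : d y < d x := by
          apply hclimb W.bypass.reverse hPrp
          · rw [hq₂, length_cons]; omega
          · rw [hq₂]
            have hg : (Walk.cons hadj₂ q₂).getVert 1 = c₂ := by
              simp [getVert_cons_succ, getVert_zero]
            rw [hg, hc₂]; exact hdy
        omega
      · refine ⟨y, hyX, hpy, ?_⟩
        have hmem : par y ∈ {u : V | u ∉ X} := by
          show par y ∉ X
          rw [hpvy]; exact v.2
        refine ⟨hmem, ?_⟩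
        have h2 : (⟨par y, hmem⟩ : {u : V | u ∉ X}) = v := Subtype.ext hpvy
        rw [h2]; exact hv
    · refine ⟨x, hxX, hpx, ?_⟩
      have hmem : par x ∈ {u : V | u ∉ X} := by
        show par x ∉ X
        rw [hpux]; exact u.2
      refine ⟨hmem, ?_⟩
      have h2 : (⟨par x, hmem⟩ : {u : V | u ∉ X}) = u := Subtype.ext hpux
      rw [h2]; exact hu
  -- counting: edges of T inside X correspond to their lower endpoints
  have hBeq : {e : Sym2 V | e ∈ T.edgeSet ∧ ∀ u ∈ e, u ∈ X}
      = (fun z => s(z, par z)) ''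
        {z : V | 0 < d z ∧ s(z, par z) ∈ T.edgeSet ∧ ∀ u ∈ s(z, par z), u ∈ X} := by
    apply Set.Subset.antisymm
    · intro e
      induction e using Sym2.ind with
      | _ a b =>
        intro he
        have hadj : T.Adj a b := he.1
        rcases hstep hadj with h | h
        · have hp : par a = b := hparu hadj (by omega)
          exact ⟨a, ⟨by omega, by rw [hp]; exact he⟩, by show s(a, par a) = s(a, b); rw [hp]⟩
        · have hp : par b = a := hparu hadj.symm (by omega)
          refine ⟨b, ⟨by omega, ?_⟩, ?_⟩
          · rw [hp, Sym2.eq_swap]; exact he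
          · show s(b, par b) = s(a, b)
            rw [hp, Sym2.eq_swap]
    · rintro e ⟨z, hz, rfl⟩
      exact hz.2
  have hinjB : Set.InjOn (fun z => s(z, par z))
      {z : V | 0 < d z ∧ s(z, par z) ∈ T.edgeSet ∧ ∀ u ∈ s(z, par z), u ∈ X} := by
    intro z hz w hw h
    simp only at h
    rcases Sym2.eq_iff.mp h with ⟨h1, -⟩ | ⟨h1, h2⟩
    · exact h1
    · exfalso
      have hz2 := (hparent z hz.1).2
      have hw2 := (hparent w hw.1).2
      rw [h2] at hz2
      rw [← h1] at hw2
      omega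
  choose Ψ hΨX hΨd hΨnX hΨmk using hQex
  set Qt := {c : (G.induce {u : V | u ∉ X}).ConnectedComponent //
          {x : V | x ∈ X ∧ ∃ u : {u : V | u ∉ X},
            (G.induce {u : V | u ∉ X}).connectedComponentMk u = c ∧ G.Adj x u.1}.ncard = 2}
    with hQt
  have hΨinj : Function.Injective (fun c : Qt => Ψ c.1 c.2) := by
    intro c c' h
    simp only at h
    apply Subtype.ext
    rw [← hΨmk c.1 c.2, ← hΨmk c'.1 c'.2]
    congr 1
    exact Subtype.ext (congrArg par h)
  have hQcard : (Set.range (fun c : Qt => Ψ c.1 c.2)).ncard = Nat.card Qt := by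
    rw [← Nat.card_coe_set_eq]
    exact Nat.card_range_of_injective hΨinj
  set r₀ := rt (T.connectedComponentMk x₀) with hr₀
  have hr₀X : r₀ ∈ X := hrtX _
  have hdr₀ : d r₀ = 0 := by
    apply hd_root
    simp only [hrootdef]
    rw [hrtk (T.connectedComponentMk x₀)]
  have hdisj : Disjoint {z : V | 0 < d z ∧ s(z, par z) ∈ T.edgeSet ∧ ∀ u ∈ s(z, par z), u ∈ X}
      (Set.range (fun c : Qt => Ψ c.1 c.2)) := by
    rw [Set.disjoint_left]
    rintro z hz ⟨c, rfl⟩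
    exact hΨnX c.1 c.2 (hz.2.2 _ (Sym2.mem_mk_right _ _))
  have hsub : {z : V | 0 < d z ∧ s(z, par z) ∈ T.edgeSet ∧ ∀ u ∈ s(z, par z), u ∈ X}
      ∪ Set.range (fun c : Qt => Ψ c.1 c.2) ⊆ (↑X : Set V) \ {r₀} := by
    intro z hz
    have hzX : z ∈ X ∧ 0 < d z := by
      rcases hz with hz | ⟨c, rfl⟩
      · exact ⟨hz.2.2 _ (Sym2.mem_mk_left _ _), hz.1⟩
      · exact ⟨hΨX c.1 c.2, hΨd c.1 c.2⟩
    refine ⟨hzX.1, ?_⟩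
    intro hzr
    rw [Set.mem_singleton_iff] at hzr
    rw [hzr] at hzX
    omega
  have hmain : {z : V | 0 < d z ∧ s(z, par z) ∈ T.edgeSet ∧ ∀ u ∈ s(z, par z), u ∈ X}.ncard
      + (Set.range (fun c : Qt => Ψ c.1 c.2)).ncard ≤ X.card - 1 := by
    rw [← Set.ncard_union_eq hdisj (Set.toFinite _) (Set.toFinite _)]
    have h2 : (((↑X : Set V)) \ {r₀}).ncard = X.card - 1 := by
      rw [Set.ncard_diff_singleton_of_mem (Finset.mem_coe.mpr hr₀X), Set.ncard_coe_finset]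
    rw [← h2]
    exact Set.ncard_le_ncard hsub (Set.toFinite _)
  have hAsub : {e | e ∈ G.edgeSet ∧ ∀ u ∈ e, u ∈ X}
      ⊆ {e : Sym2 V | e ∈ T.edgeSet ∧ ∀ u ∈ e, u ∈ X} ∪ S := by
    intro e he
    by_cases hs : e ∈ S
    · exact Or.inr hs
    · exact Or.inl ⟨by rw [hTdef, edgeSet_deleteEdges]; exact ⟨he.1, hs⟩, he.2⟩
  have hAcard : {e | e ∈ G.edgeSet ∧ ∀ u ∈ e, u ∈ X}.ncard
      ≤ {e : Sym2 V | e ∈ T.edgeSet ∧ ∀ u ∈ e, u ∈ X}.ncard + p := by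
    refine le_trans (Set.ncard_le_ncard hAsub (Set.toFinite _)) ?_
    refine le_trans (Set.ncard_union_le _ _) ?_
    omega
  have hB : {e : Sym2 V | e ∈ T.edgeSet ∧ ∀ u ∈ e, u ∈ X}.ncard
      = {z : V | 0 < d z ∧ s(z, par z) ∈ T.edgeSet ∧ ∀ u ∈ s(z, par z), u ∈ X}.ncard := by
    rw [hBeq]
    exact Set.ncard_image_of_injOn hinjB
  show {e | e ∈ G.edgeSet ∧ ∀ u ∈ e, u ∈ X}.ncard + Nat.card Qt ≤ X.card - 1 + p
  omega
end

section
/- Let W be a walk v_0, e_1, v_1, ..., e_r, v_r in a graph G where each edge e of G is assigned a unique time t(e), and suppose W is monotone, i.e., t(e_1) ≤ t(e_2) ≤ ... ≤ t(e_r) when edges are traversed in order. If G is a tree, then W traverses every edge of the unique (v_0, v_r)-path P in G, and the times of the path edges in order along P are non-decreasing. -/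
open SimpleGraph

lemma SimpleGraph.IsAcyclic.path_edges_sublist_walk_edges {V : Type*} {G : SimpleGraph V}
    (hG : G.IsAcyclic) {u v : V} (P : G.Path u v) (W : G.Walk u v) :
    (P : G.Walk u v).edges.Sublist W.edges := by
  classical
  rw [(hG.subsingleton_path u v).elim P W.toPath]
  exact W.edges_bypass_sublist_edges

theorem stmt13_general {V : Type*} (G : SimpleGraph V) (hT : G.IsTree)
    (t : Sym2 V → ℕ)
    {u v : V} (W : G.Walk u v)
    (hmono : (W.edges.map t).Chain' (· ≤ ·)) (P : G.Path u v) :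
    (∀ e ∈ (P : G.Walk u v).edges, e ∈ W.edges) ∧
      ((P : G.Walk u v).edges.map t).Chain' (· ≤ ·) := by
  have hsub := hT.isAcyclic.path_edges_sublist_walk_edges P W
  exact ⟨fun _ he => hsub.subset he, hmono.sublist (hsub.map t)⟩

/-- Let `G` be a tree whose edges carry pairwise distinct times `t`, and
let `W` be a monotone walk from `v₀` to `v_r` (the times of its edges, in order, are
non-decreasing). Then `W` traverses every edge of the unique `(v₀, v_r)`-path `P`, and the
times of the edges of `P`, in order along `P`, are non-decreasing. -/
theorem stmt13 {V : Type*} (G : SimpleGraph V) (hT : G.IsTree)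
    (t : Sym2 V → ℕ) (hinj : Set.InjOn t G.edgeSet)
    {u v : V} (W : G.Walk u v)
    (hmono : (W.edges.map t).Chain' (· ≤ ·)) (P : G.Path u v) :
    (∀ e ∈ (P : G.Walk u v).edges, e ∈ W.edges) ∧
      ((P : G.Walk u v).edges.map t).Chain' (· ≤ ·) :=
  stmt13_general G hT t W hmono P
end

section
/- Let (P, Q) be an edge cut of a connected graph G with edge cut-set {e_1, e_2} of size two, where G[P] is a tree, and suppose each edge of G[P] ∪ {e_1, e_2} has a unique time assignment t. Let the backbone be the path y_1, e_1', v_1, ..., v_{ℓ-1}, e_ℓ', y_2 formed by e_1, the (x_1,x_2)-path in G[P], and e_2. If t(e_i') > t(e_{i+1}') and t(e_{i+2}') > t(e_{i+1}') for some i, then no monotone walk in G starting at a vertex of Q can traverse the edge e_{i+1}'. -/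
open SimpleGraph Walk

section Stmt14Aux

variable {V : Type*}

/-- If a walk starts in `P` and all its edges have both endpoints in `P`,
then its whole support lies in `P`. -/
lemma stmt14_support_mem {G : SimpleGraph V} {P : Set V} :
    ∀ {u v : V} (W : G.Walk u v), u ∈ P →
      (∀ e ∈ W.edges, ∀ x ∈ e, x ∈ P) → ∀ x ∈ W.support, x ∈ P := by
  intro u v W
  induction W with
  | nil =>
    intro hu _ x hx
    simp only [Walk.support_nil, List.mem_singleton] at hx
    exact hx ▸ hu
  | @cons u w v h p ih =>
    intro hu he x hx
    rw [Walk.support_cons] at hx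
    rcases List.mem_cons.mp hx with rfl | hx
    · exact hu
    · refine ih ?_ ?_ x hx
      · exact he _ (by simp [Walk.edges_cons]) w (Sym2.mem_mk_right u w)
      · intro e hee; exact he e (by simp [Walk.edges_cons, hee])

/-- Lift a walk whose support lies in `P` to the induced graph on `P`. -/
lemma stmt14_lift {G : SimpleGraph V} {P : Set V} :
    ∀ {u v : V} (W : G.Walk u v) (hu : u ∈ P) (hv : v ∈ P),
      (∀ x ∈ W.support, x ∈ P) →
      ∃ W' : (G.induce P).Walk ⟨u, hu⟩ ⟨v, hv⟩,
        W'.edges.map (Sym2.map Subtype.val) = W.edges ∧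
        W'.support.map Subtype.val = W.support := by
  intro u v W
  induction W with
  | nil =>
    intro hu hv _
    exact ⟨Walk.nil, by simp, by simp⟩
  | @cons u w v h p ih =>
    intro hu hv hsup
    have hw : w ∈ P := hsup w (by simp [Walk.support_cons])
    obtain ⟨p', h1, h2⟩ := ih hw hv (fun x hx => hsup x (by simp [Walk.support_cons, hx]))
    have hadj : (G.induce P).Adj ⟨u, hu⟩ ⟨w, hw⟩ := by
      simpa using h
    exact ⟨Walk.cons hadj p', by simp [Walk.edges_cons, h1], by simp [Walk.support_cons, h2]⟩

/-- Split a walk after `k` steps. -/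
lemma stmt14_split {G : SimpleGraph V} :
    ∀ (k : ℕ) {u v : V} (p : G.Walk u v), k ≤ p.length →
      ∃ (w : V) (p₁ : G.Walk u w) (p₂ : G.Walk w v),
        p = p₁.append p₂ ∧ p₁.edges = p.edges.take k ∧ p₂.edges = p.edges.drop k := by
  intro k
  induction k with
  | zero =>
    intro u v p _
    exact ⟨u, Walk.nil, p, (Walk.nil_append p).symm, by simp, by simp⟩
  | succ k ih =>
    intro u v p hk
    cases p with
    | nil => simp at hk
    | @cons u w v h q =>
      have hk' : k ≤ q.length := by
        simpa [Walk.length_cons] using hk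
      obtain ⟨m, p₁, p₂, heq, h1, h2⟩ := ih q hk'
      refine ⟨m, Walk.cons h p₁, p₂, ?_, ?_, ?_⟩
      · rw [Walk.cons_append, heq]
      · simp [Walk.edges_cons, h1]
      · simp [Walk.edges_cons, h2]

/-- In an acyclic graph, the edges of a path are contained in any walk with
the same endpoints. -/
lemma stmt14_path_edges_subset [DecidableEq V] {G : SimpleGraph V} (hG : G.IsAcyclic) {u v : V}
    (p : G.Walk u v) (hp : p.IsPath) (W : G.Walk u v) : ∀ e ∈ p.edges, e ∈ W.edges := by
  have h := hG.path_unique ⟨p, hp⟩ ⟨W.bypass, W.bypass_isPath⟩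
  have h' : p = W.bypass := congrArg Subtype.val h
  intro e he
  exact W.edges_bypass_subset (h' ▸ he)

/-- A walk from `P` to `Q` has a first crossing. -/
lemma stmt14_first_cross {H : SimpleGraph V} {P Q : Set V} (hpart : ∀ v : V, v ∈ P ↔ v ∉ Q) :
    ∀ {u v : V} (W : H.Walk u v), u ∈ P → v ∈ Q →
      ∃ (u' w' : V) (ρ : H.Walk u u'),
        (∀ x ∈ ρ.support, x ∈ P) ∧ w' ∈ Q ∧ H.Adj u' w' := by
  intro u v W
  induction W with
  | nil =>
    intro hu hv
    exact absurd hv ((hpart _).mp hu)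
  | @cons u w v h p ih =>
    intro hu hv
    by_cases hw : w ∈ P
    · obtain ⟨u', w', ρ, hh1, hh2, hh3⟩ := ih hw hv
      refine ⟨u', w', Walk.cons h ρ, ?_, hh2, hh3⟩
      intro x hx
      rw [Walk.support_cons] at hx
      rcases List.mem_cons.mp hx with rfl | hx
      · exact hu
      · exact hh1 x hx
    · have hwQ : w ∈ Q := by
        by_contra hq
        exact hw ((hpart w).mpr hq)
      exact ⟨u, w, Walk.nil, by simpa using hu, hwQ, h⟩

/-- Peel the first edge off a walk, given the shape of its edge list. -/
lemma stmt14_peel {G : SimpleGraph V} {c d c' : V} (B : G.Walk c d) (L : List (Sym2 V))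
    (h : B.edges = s(c, c') :: L) :
    ∃ (had : G.Adj c c') (B' : G.Walk c' d), B'.edges = L ∧ B = Walk.cons had B' := by
  cases B with
  | nil => simp at h
  | @cons c w d had B' =>
    rw [Walk.edges_cons] at h
    have h1 : s(c, w) = s(c, c') := (List.cons_eq_cons.mp h).1
    have hw : w = c' := Sym2.congr_right.mp h1
    subst hw
    exact ⟨had, B', (List.cons_eq_cons.mp h).2, rfl⟩

end Stmt14Aux

/-- Let `(P, Q)` be an edge cut of a connected graph `G` with edge cut-set
`{x₁y₁, x₂y₂}` of size two (with `x₁, x₂ ∈ P`, `y₁, y₂ ∈ Q`, all four endpoints distinct)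
such that `G[P]` is a tree, and let `t` assign distinct times to the edges of `G`. Let `B`
be the backbone: the path from `y₁` to `y₂` consisting of `x₁y₁`, the `(x₁,x₂)`-path in
`G[P]`, and `x₂y₂`. If, for some index `i`, `t(e_i) > t(e_{i+1})` and `t(e_{i+2}) > t(e_{i+1})`
where `e_i, e_{i+1}, e_{i+2}` are consecutive backbone edges, then no monotone walk of `G`
starting at a vertex of `Q` can traverse the edge `e_{i+1}`. -/
theorem stmt14 {V : Type*} [DecidableEq V]
    (G : SimpleGraph V) (hconn : G.Connected)
    (P Q : Set V) (hpart : ∀ v : V, v ∈ P ↔ v ∉ Q)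
    (x₁ y₁ x₂ y₂ : V)
    (hx₁ : x₁ ∈ P) (hx₂ : x₂ ∈ P) (hy₁ : y₁ ∈ Q) (hy₂ : y₂ ∈ Q)
    (hdist : [x₁, y₁, x₂, y₂].Nodup)
    (he₁ : G.Adj x₁ y₁) (he₂ : G.Adj x₂ y₂)
    (hcut : ∀ u v : V, G.Adj u v → u ∈ P → v ∈ Q →
      (s(u, v) = s(x₁, y₁) ∨ s(u, v) = s(x₂, y₂)))
    (htree : (G.induce P).IsTree)
    (t : Sym2 V → ℕ) (hinj : Set.InjOn t G.edgeSet)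
    (B : G.Walk y₁ y₂) (hB : B.IsPath)
    (hBedges : ∃ M : List (Sym2 V), B.edges = s(y₁, x₁) :: M ++ [s(x₂, y₂)] ∧
      ∀ e ∈ M, ∀ u ∈ e, u ∈ P)
    (i : ℕ) (hi : i + 2 < B.edges.length)
    (h1 : t (B.edges[i + 1]'(by omega)) < t (B.edges[i]'(by omega)))
    (h2 : t (B.edges[i + 1]'(by omega)) < t (B.edges[i + 2]'hi)) :
    ∀ q ∈ Q, ∀ (z : V) (W : G.Walk q z),
      (W.edges.map t).Chain' (· ≤ ·) → B.edges[i + 1]'(by omega) ∉ W.edges := by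
  classical
  obtain ⟨M, hM1, hM2⟩ := hBedges
  have hM1' : B.edges = (s(y₁, x₁) :: M) ++ [s(x₂, y₂)] := by simpa using hM1
  have hlen : B.edges.length = M.length + 2 := by
    rw [hM1']; simp
  have him : i < M.length := by omega
  have hiL : i < B.edges.length := by omega
  have hiM1 : i + 1 < B.edges.length := by omega
  -- a generic computation of entries of B.edges
  have hBq : ∀ (k : ℕ), B.edges[k]? = ((s(y₁, x₁) :: M) ++ [s(x₂, y₂)])[k]? := by
    intro k; rw [hM1']
  have hgetGen : ∀ (k : ℕ) (hk : k < M.length) (hk' : k + 1 < B.edges.length),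
      B.edges[k + 1]'hk' = M[k]'hk := by
    intro k hk hk'
    have hq : B.edges[k + 1]? = some (M[k]'hk) := by
      rw [hBq (k + 1)]
      rw [show (s(y₁, x₁) :: M ++ [s(x₂, y₂)]) = s(y₁, x₁) :: (M ++ [s(x₂, y₂)]) by simp]
      rw [List.getElem?_cons_succ, List.getElem?_append_left hk,
        List.getElem?_eq_getElem hk]
    rw [List.getElem?_eq_getElem hk'] at hq
    exact Option.some.inj hq
  -- identify the three backbone edges
  have hgetMid : B.edges[i + 1]'hiM1 = M[i]'him := hgetGen i him hiM1
  obtain ⟨eM, heMeq⟩ : ∃ e, M[i]'him = e := ⟨_, rfl⟩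
  obtain ⟨eL, heLeq⟩ : ∃ e, B.edges[i]'hiL = e := ⟨_, rfl⟩
  obtain ⟨eR, heReq⟩ : ∃ e, B.edges[i + 2]'hi = e := ⟨_, rfl⟩
  have h1' : t eM < t eL := by
    rw [← heMeq, ← hgetMid, ← heLeq]; exact h1
  have h2' : t eM < t eR := by
    rw [← heMeq, ← hgetMid, ← heReq]; exact h2
  have hgetL : ∀ hii : 1 ≤ i, eL = M[i - 1]'(by omega) := by
    intro hii
    obtain ⟨j, rfl⟩ : ∃ j, i = j + 1 := ⟨i - 1, by omega⟩
    rw [← heLeq]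
    exact hgetGen j (by omega) hiL
  have hgetL0 : i = 0 → eL = s(y₁, x₁) := by
    intro hii
    subst hii
    rw [← heLeq]
    have hq : B.edges[0]? = some s(y₁, x₁) := by
      rw [hBq 0]
      rw [show (s(y₁, x₁) :: M ++ [s(x₂, y₂)]) = s(y₁, x₁) :: (M ++ [s(x₂, y₂)]) by simp]
      simp
    rw [List.getElem?_eq_getElem hiL] at hq
    exact Option.some.inj hq
  have hgetR : ∀ hii : i + 1 < M.length, eR = M[i + 1]'hii := by
    intro hii
    rw [← heReq]
    exact hgetGen (i + 1) hii hi
  have hgetR2 : i + 1 = M.length → eR = s(x₂, y₂) := by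
    intro hii
    rw [← heReq]
    have hq : B.edges[i + 2]? = some s(x₂, y₂) := by
      rw [hBq (i + 2)]
      rw [show (s(y₁, x₁) :: M ++ [s(x₂, y₂)]) = s(y₁, x₁) :: (M ++ [s(x₂, y₂)]) by simp]
      rw [List.getElem?_cons_succ]
      have : i + 1 = M.length + 0 := by omega
      rw [this, ← hii]
      rw [hii, List.getElem?_concat_length]
    rw [List.getElem?_eq_getElem hi] at hq
    exact Option.some.inj hq
  -- extract the middle walk B₂ : x₁ → x₂ with edges M
  have hy1x1 : y₁ ≠ x₁ := by simp at hdist; tauto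
  have hy2x2 : y₂ ≠ x₂ := by simp at hdist; tauto
  obtain ⟨had1, B₁, hB₁e, hBeq⟩ := stmt14_peel B (M ++ [s(x₂, y₂)]) hM1
  have hB₁rev : B₁.reverse.edges = s(y₂, x₂) :: M.reverse := by
    rw [Walk.edges_reverse, hB₁e]
    simp [Sym2.eq_swap]
  obtain ⟨had2, R', hR'e, hReq⟩ := stmt14_peel B₁.reverse M.reverse hB₁rev
  set B₂ : G.Walk x₁ x₂ := R'.reverse with hB₂def
  have hB₂e : B₂.edges = M := by
    rw [hB₂def, Walk.edges_reverse, hR'e, List.reverse_reverse]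
  have hB₁path : B₁.IsPath := by
    rw [hBeq] at hB; exact hB.of_cons
  have hB₂path : B₂.IsPath := by
    have : R'.IsPath := by
      have := hB₁path.reverse
      rw [hReq] at this
      exact this.of_cons
    exact this.reverse
  have hB₂sup : ∀ x ∈ B₂.support, x ∈ P :=
    stmt14_support_mem B₂ hx₁ (fun e he => hM2 e (hB₂e ▸ he))
  -- lift to the induced tree
  obtain ⟨π, hπe, hπs⟩ := stmt14_lift B₂ hx₁ hx₂ hB₂sup
  have hπpath : π.IsPath := by
    rw [Walk.isPath_def]
    have hnd : (π.support.map Subtype.val).Nodup := by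
      rw [hπs]; exact (Walk.isPath_def _).mp hB₂path
    exact hnd.of_map
  have hπelen : π.edges.length = M.length := by
    rw [← hB₂e, ← hπe, List.length_map]
  have hπlen : i ≤ π.length := by
    rw [← Walk.length_edges, hπelen]; omega
  -- split the lifted path at i
  obtain ⟨w, π₁, π₂, hsplit, hed1, hed2⟩ := stmt14_split i π hπlen
  have hπ₂ne : π₂.edges ≠ [] := by
    rw [hed2]
    intro hc
    have := congrArg List.length hc
    simp [hπelen] at this
    omega
  obtain ⟨w', hadj, π₃, hπ₃e, hπ₂eq⟩ :
      ∃ (w' : P) (hadj : (G.induce P).Adj w w') (π₃ : (G.induce P).Walk w' ⟨x₂, hx₂⟩),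
        π₃.edges = π.edges.drop (i + 1) ∧ π₂ = Walk.cons hadj π₃ := by
    cases π₂ with
    | nil => simp at hπ₂ne
    | @cons _ w' _ hadj π₃ =>
      refine ⟨w', hadj, π₃, ?_, rfl⟩
      have : (Walk.cons hadj π₃).edges = π.edges.drop i := hed2
      rw [Walk.edges_cons] at this
      have h' := congrArg List.tail this
      simpa [List.tail_drop] using h'
  -- the middle edge upstairs
  have hedi : π.edges[i]'(by omega) = s(w, w') := by
    have hth : π₂.edges = π.edges.drop i := hed2
    rw [hπ₂eq, Walk.edges_cons] at hth
    have hq : π.edges[i]? = some s(w, w') := by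
      have := List.getElem?_drop (xs := π.edges) (i := i) (j := 0)
      rw [← hth] at this
      simpa using this.symm
    rw [List.getElem?_eq_getElem (by omega)] at hq
    exact Option.some.inj hq
  have hproj : ∀ (k : ℕ) (hk : k < M.length),
      Sym2.map Subtype.val (π.edges[k]'(by omega)) = M[k]'hk := by
    intro k hk
    have hq : M[k]? = some (Sym2.map Subtype.val (π.edges[k]'(by omega))) := by
      conv_lhs => rw [← hB₂e, ← hπe]
      simp [List.getElem?_eq_getElem (show k < π.edges.length by omega)]
    rw [List.getElem?_eq_getElem hk] at hq
    exact (Option.some.inj hq).symm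
  have heMw : eM = s((w : V), (w' : V)) := by
    rw [← heMeq, ← hproj i him, hedi, Sym2.map_pair_eq]
  -- paths and their edge memberships
  have hπ₁path : π₁.IsPath := by
    rw [hsplit] at hπpath; exact hπpath.of_append_left
  have hπ₂path : π₂.IsPath := by
    rw [hsplit] at hπpath; exact hπpath.of_append_right
  have hπ₃path : π₃.IsPath := by
    rw [hπ₂eq] at hπ₂path; exact hπ₂path.of_cons
  have hw'nmem : w' ∉ π₁.support := by
    rw [hsplit] at hπpath
    have hnd := (Walk.isPath_def _).mp hπpath
    rw [Walk.support_append] at hnd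
    have hw'mem : w' ∈ π₂.support.tail := by
      rw [hπ₂eq, Walk.support_cons]
      simp [Walk.start_mem_support]
    exact fun hc => (List.disjoint_of_nodup_append hnd) hc hw'mem
  have hπ₁cpath : (π₁.concat hadj).IsPath := by
    rw [Walk.isPath_def, Walk.support_concat]
    rw [List.nodup_append]
    exact ⟨(Walk.isPath_def _).mp hπ₁path, List.nodup_singleton _,
      fun x hx y hy hxy => hw'nmem (by rwa [hxy, List.mem_singleton.mp hy] at hx)⟩
  -- the acyclicity of the induced graph
  have hac : (G.induce P).IsAcyclic := htree.2
  -- crux 1 : no P-walk from an endpoint of eM to x₁ avoiding eL (when i ≥ 1)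
  have crux1 : ∀ hii : 1 ≤ i, ∀ (x : V), x ∈ eM → ∀ (ρ : G.Walk x x₁),
      (∀ y ∈ ρ.support, y ∈ P) → eL ∉ ρ.edges → False := by
    intro hii x hx ρ hρsup hρavoid
    have hiL : i - 1 < M.length := by omega
    set eL' := π.edges[i - 1]'(by omega) with heL'def
    have hL'mem1 : eL' ∈ π₁.edges := by
      rw [hed1]
      have : (π.edges.take i)[i-1]'(by simp; omega) = eL' := by
        rw [List.getElem_take]
      exact this ▸ List.getElem_mem _
    have hL'proj : Sym2.map Subtype.val eL' = eL := by
      rw [heL'def, hproj (i-1) hiL, hgetL hii]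
    have hxP : x ∈ P := hρsup x ρ.start_mem_support
    obtain ⟨ρ', hρ'e, _⟩ := stmt14_lift ρ hxP hx₁ hρsup
    rw [heMw] at hx
    rcases Sym2.mem_iff.mp hx with hxw | hxw
    · -- x = w
      have hxsub : (⟨x, hxP⟩ : {v // v ∈ P}) = w := Subtype.ext hxw
      have := stmt14_path_edges_subset hac π₁ hπ₁path (hxsub ▸ ρ').reverse eL' hL'mem1
      rw [Walk.edges_reverse, List.mem_reverse] at this
      apply hρavoid
      rw [← hL'proj, ← hρ'e]
      subst hxsub
      exact List.mem_map_of_mem this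
    · -- x = w'
      have hxsub : (⟨x, hxP⟩ : {v // v ∈ P}) = w' := Subtype.ext hxw
      have hL'mem2 : eL' ∈ (π₁.concat hadj).edges := by
        rw [Walk.edges_concat, List.concat_eq_append]
        exact List.mem_append_left _ hL'mem1
      have := stmt14_path_edges_subset hac (π₁.concat hadj) hπ₁cpath (hxsub ▸ ρ').reverse eL' hL'mem2
      rw [Walk.edges_reverse, List.mem_reverse] at this
      apply hρavoid
      rw [← hL'proj, ← hρ'e]
      subst hxsub
      exact List.mem_map_of_mem this
  -- crux 2 : no P-walk from an endpoint of eM to x₂ avoiding eR (when i+1 < M.length)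
  have crux2 : ∀ hii : i + 1 < M.length, ∀ (x : V), x ∈ eM → ∀ (ρ : G.Walk x x₂),
      (∀ y ∈ ρ.support, y ∈ P) → eR ∉ ρ.edges → False := by
    intro hii x hx ρ hρsup hρavoid
    set eR' := π.edges[i + 1]'(by omega) with heR'def
    have hR'mem3 : eR' ∈ π₃.edges := by
      rw [hπ₃e]
      have : (π.edges.drop (i+1))[0]'(by simp [hπelen]; omega) = eR' := by
        rw [List.getElem_drop]
      exact this ▸ List.getElem_mem _
    have hR'mem2 : eR' ∈ π₂.edges := by
      rw [hπ₂eq, Walk.edges_cons]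
      exact List.mem_cons_of_mem _ hR'mem3
    have hR'proj : Sym2.map Subtype.val eR' = eR := by
      rw [heR'def, hproj (i+1) hii, hgetR hii]
    have hxP : x ∈ P := hρsup x ρ.start_mem_support
    obtain ⟨ρ', hρ'e, _⟩ := stmt14_lift ρ hxP hx₂ hρsup
    rw [heMw] at hx
    rcases Sym2.mem_iff.mp hx with hxw | hxw
    · have hxsub : (⟨x, hxP⟩ : {v // v ∈ P}) = w := Subtype.ext hxw
      have := stmt14_path_edges_subset hac π₂ hπ₂path (hxsub ▸ ρ') eR' hR'mem2
      apply hρavoid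
      rw [← hR'proj, ← hρ'e]
      subst hxsub
      exact List.mem_map_of_mem this
    · have hxsub : (⟨x, hxP⟩ : {v // v ∈ P}) = w' := Subtype.ext hxw
      have := stmt14_path_edges_subset hac π₃ hπ₃path (hxsub ▸ ρ') eR' hR'mem3
      apply hρavoid
      rw [← hR'proj, ← hρ'e]
      subst hxsub
      exact List.mem_map_of_mem this
  -- the graph with the two blocking edges removed
  let H : SimpleGraph V := G.deleteEdges {eL, eR}
  have hHdef : H = G.deleteEdges {eL, eR} := rfl
  let a : V := (w : V)
  let b : V := (w' : V)
  have haP : a ∈ P := w.2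
  have hbP : b ∈ P := w'.2
  have hGadjab : G.Adj a b := by
    have := hadj
    simp only [comap_adj, Function.Embedding.coe_subtype] at this
    exact this
  have heMne : eM ≠ eL ∧ eM ≠ eR := by
    constructor
    · intro hc; rw [hc] at h1'; omega
    · intro hc; rw [hc] at h2'; omega
  have hHadjab : H.Adj a b := by
    rw [hHdef, deleteEdges_adj]
    refine ⟨hGadjab, ?_⟩
    rw [← heMw]
    simp only [Set.mem_insert_iff, Set.mem_singleton_iff]
    push_neg
    exact heMne
  -- The key claim: no vertex of Q is H-reachable from a
  have hK : ∀ q ∈ Q, ¬ H.Reachable a q := by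
    intro q hq hr
    obtain ⟨ω⟩ := hr
    obtain ⟨u', w'', ρH, hρsup, hw''Q, hadj'⟩ := stmt14_first_cross hpart ω haP hq
    have hHleG : H ≤ G := deleteEdges_le _
    have hρedge : ∀ e ∈ ρH.edges, e ∈ H.edgeSet := ρH.edges_subset_edgeSet
    set ρ : G.Walk a u' := ρH.transfer G
      (fun e he => (edgeSet_mono hHleG) (hρedge e he)) with hρdef
    have hρe : ρ.edges = ρH.edges := Walk.edges_transfer _ _
    have hρs : ρ.support = ρH.support := Walk.support_transfer _ _
    have hρsup' : ∀ x ∈ ρ.support, x ∈ P := by rw [hρs]; exact hρsup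
    have havoid : eL ∉ ρ.edges ∧ eR ∉ ρ.edges := by
      constructor <;> intro hc <;>
      · have := hρedge _ (hρe ▸ hc)
        rw [hHdef, edgeSet_deleteEdges] at this
        simp at this
    have hu'P : u' ∈ P := hρsup' u' (hρs ▸ ρH.end_mem_support)
    have hadj'' := deleteEdges_adj.mp hadj'
    have hGadj' : G.Adj u' w'' := hadj''.1
    have hnotdel : s(u', w'') ∉ ({eL, eR} : Set (Sym2 V)) := hadj''.2
    rcases hcut u' w'' hGadj' hu'P hw''Q with hcase | hcase
    · -- crossing e₁, so u' = x₁
      have hu'x₁ : u' = x₁ := by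
        rcases Sym2.eq_iff.mp hcase with ⟨h', _⟩ | ⟨h', _⟩
        · exact h'
        · exact absurd ((hpart u').mp hu'P) (by rw [h']; simp [hy₁])
      subst hu'x₁
      rcases Nat.eq_zero_or_pos i with hi0 | hipos
      · -- i = 0 : the crossing edge IS eL
        apply hnotdel
        rw [hcase, Sym2.eq_swap, ← hgetL0 hi0]
        simp
      · exact crux1 hipos a (by rw [heMw]; exact Sym2.mem_mk_left _ _)
          ρ hρsup' havoid.1
    · -- crossing e₂, so u' = x₂
      have hu'x₂ : u' = x₂ := by
        rcases Sym2.eq_iff.mp hcase with ⟨h', _⟩ | ⟨h', _⟩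
        · exact h'
        · exact absurd ((hpart u').mp hu'P) (by rw [h']; simp [hy₂])
      subst hu'x₂
      rcases lt_or_ge (i + 1) M.length with hiM | hiM
      · exact crux2 hiM a (by rw [heMw]; exact Sym2.mem_mk_left _ _)
          ρ hρsup' havoid.2
      · -- i + 1 = M.length : the crossing edge IS eR
        apply hnotdel
        rw [hcase, ← hgetR2 (by omega)]
        simp
  -- Main monotone-walk lemma
  have hbD : H.Reachable a b := hHadjab.reachable
  have hML : ∀ (z u : V) (W : G.Walk u z), (W.edges.map t).Chain' (· ≤ ·) →
      ¬ H.Reachable a u → eM ∉ W.edges := by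
    intro z u W
    induction W with
    | nil => simp
    | @cons u v z hadjW p ih =>
      intro hchain hu hmem
      rw [Walk.edges_cons] at hmem
      by_cases hv : H.Reachable a v
      · have hf : s(u, v) = eL ∨ s(u, v) = eR := by
          by_contra hc
          push_neg at hc
          apply hu
          refine hv.trans (SimpleGraph.Adj.reachable ?_)
          rw [hHdef, deleteEdges_adj]
          refine ⟨hadjW.symm, ?_⟩
          rw [Sym2.eq_swap]
          simp only [Set.mem_insert_iff, Set.mem_singleton_iff]
          push_neg
          exact hc
        have htlt : t eM < t (s(u, v)) := by
          rcases hf with h | h <;> rw [h]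
          · exact h1'
          · exact h2'
        rcases List.mem_cons.mp hmem with hc | hc
        · rw [← hc] at htlt; omega
        · have hpw : ((Walk.cons hadjW p).edges.map t).Pairwise (· ≤ ·) :=
            List.isChain_iff_pairwise.mp hchain
          rw [Walk.edges_cons, List.map_cons] at hpw
          have := (List.pairwise_cons.mp hpw).1 (t eM) (List.mem_map_of_mem (f := t) hc)
          omega
      · rcases List.mem_cons.mp hmem with hc | hc
        · apply hu
          rw [heMw] at hc
          rcases Sym2.eq_iff.mp hc with ⟨h', _⟩ | ⟨_, h'⟩
          · subst h'; exact Reachable.refl _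
          · subst h'; exact hbD
        · refine ih ?_ hv hc
          have := hchain.tail
          rw [Walk.edges_cons, List.map_cons] at this
          exact this
  intro q hq z W hW hmem
  have hmem' : eM ∈ W.edges := by
    rw [← heMeq, ← hgetMid]
    exact hmem
  exact hML z q W hW (hK q hq) hmem'
end

section
/- Let 𝒢 = (G_1, ..., G_L) be a temporal graph with connected underlying graph G on vertex set V, and let q = |E(G)|·L - Σ_{t=1}^{L} |E(G_t)| be the total number of edge non-appearances. If some edge xy of G appears in every snapshot G_t, then contracting xy in every snapshot (summing the weights w(x) + w(y) onto the new vertex) preserves the answer to Weighted k-arb NS-TEXP: there is a monotone walk from v of weight ≥ k in 𝒢 if and only if there is one from the corresponding start vertex in the contracted temporal graph. -/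
/-- `hasMonotoneWalk 𝒢 w v k` holds if the temporal graph `𝒢` admits a monotone walk
starting at `v` visiting a vertex set of total `w`-weight at least `k`. -/
def hasMonotoneWalk {V : Type*} [DecidableEq V] {L : ℕ}
    (𝒢 : Fin L → SimpleGraph V) (w : V → ℕ) (v : V) (k : ℕ) : Prop :=
  ∃ (y : V) (W : (⨆ t, 𝒢 t).Walk v y) (τ : Fin W.edges.length → Fin L),
    Monotone τ ∧ (∀ i, W.edges.get i ∈ (𝒢 (τ i)).edgeSet) ∧
    k ≤ ∑ u ∈ W.support.toFinset, w u

section Aux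
variable {V : Type*} [DecidableEq V] {L : ℕ}

/-- Timed walk predicate: monotone walk from `v`, all edge times ≥ `t`, support `S`. -/
inductive TW (𝒢 : Fin L → SimpleGraph V) : V → Fin L → Finset V → Prop
  | nil (v t) : TW 𝒢 v t {v}
  | cons {v u : V} {t t' : Fin L} {S : Finset V} (hle : t ≤ t')
      (hadj : (𝒢 t').Adj v u) (h : TW 𝒢 u t' S) : TW 𝒢 v t (insert v S)

variable {𝒢 : Fin L → SimpleGraph V}

lemma TW.mono {v t t' S} (h : TW 𝒢 v t' S) (hle : t ≤ t') : TW 𝒢 v t S := by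
  cases h with
  | nil => exact TW.nil _ _
  | cons h1 h2 h3 => exact TW.cons (le_trans hle h1) h2 h3

lemma TW.start_mem {v t S} (h : TW 𝒢 v t S) : v ∈ S := by
  cases h with
  | nil => exact Finset.mem_singleton_self _
  | cons => exact Finset.mem_insert_self _ _

lemma TW.congr {v t S S'} (h : TW 𝒢 v t S) (hS : S = S') : TW 𝒢 v t S' := hS ▸ h

private lemma monotone_cases {n : ℕ} (a : Fin L) (f : Fin n → Fin L)
    (h : ∀ i, a ≤ f i) (hf : Monotone f) :
    Monotone (Fin.cases a f : Fin (n+1) → Fin L) := by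
  intro i j hij
  induction i using Fin.cases with
  | zero =>
    induction j using Fin.cases with
    | zero => exact le_rfl
    | succ j => exact h j
  | succ i =>
    induction j using Fin.cases with
    | zero => exact absurd hij (by simp [Fin.le_def])
    | succ j => exact hf (by simpa [Fin.succ_le_succ_iff] using hij)

/-- From a timed walk, produce a walk with a monotone time labelling. -/
lemma TW.toWalk {v t S} (h : TW 𝒢 v t S) :
    ∃ (z : V) (W : (⨆ s, 𝒢 s).Walk v z) (τ : Fin W.edges.length → Fin L),
      Monotone τ ∧ (∀ i, W.edges.get i ∈ (𝒢 (τ i)).edgeSet) ∧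
      (∀ i, t ≤ τ i) ∧ W.support.toFinset = S := by
  induction h with
  | nil v t =>
    refine ⟨v, SimpleGraph.Walk.nil, fun i => i.elim0, fun i => i.elim0, fun i => i.elim0,
      fun i => i.elim0, by simp⟩
  | @cons v u t t' S hle hadj hrest ih =>
    obtain ⟨z, W, τ, hmono, hedge, hlb, hsupp⟩ := ih
    have hadj' : (⨆ s, 𝒢 s).Adj v u := le_iSup 𝒢 t' hadj
    refine ⟨z, SimpleGraph.Walk.cons hadj' W, Fin.cases t' τ, ?_, ?_, ?_, ?_⟩
    · exact monotone_cases t' τ hlb hmono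
    · intro i
      induction i using Fin.cases with
      | zero => exact hadj
      | succ i => exact hedge i
    · intro i
      induction i using Fin.cases with
      | zero => exact hle
      | succ i => exact le_trans hle (hlb i)
    · simp [hsupp]

/-- From a walk with monotone time labelling, produce a timed walk. -/
lemma TW.ofWalk : ∀ {v z : V} (W : (⨆ s, 𝒢 s).Walk v z) (τ : Fin W.edges.length → Fin L),
    Monotone τ → (∀ i, W.edges.get i ∈ (𝒢 (τ i)).edgeSet) →
    ∀ t₀, (∀ i, t₀ ≤ τ i) → TW 𝒢 v t₀ W.support.toFinset := by
  intro v z W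
  induction W with
  | nil =>
    intro τ _ _ t₀ _
    exact (TW.nil _ t₀).congr (by simp)
  | @cons a b c h W ih =>
    intro τ hmono hedge t₀ hlb
    have hlen : 0 < (SimpleGraph.Walk.cons h W).edges.length := by simp
    have hlt : ∀ i : Fin W.edges.length,
        i.1 + 1 < (SimpleGraph.Walk.cons h W).edges.length := by
      intro i; simpa using Nat.succ_lt_succ i.isLt
    have h0 : (𝒢 (τ ⟨0, hlen⟩)).Adj a b := by
      have := hedge ⟨0, hlen⟩
      simpa using this
    have hrest : TW 𝒢 b (τ ⟨0, hlen⟩) W.support.toFinset := by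
      refine ih (fun i => τ ⟨i.1 + 1, hlt i⟩)
        (fun i j hij => hmono (by rw [Fin.le_def]; exact Nat.succ_le_succ hij))
        (fun i => by simpa using hedge ⟨i.1 + 1, hlt i⟩)
        (τ ⟨0, hlen⟩) (fun i => hmono (by rw [Fin.le_def]; exact Nat.zero_le _))
    exact (TW.cons (hlb ⟨0, hlen⟩) h0 hrest).congr (by simp)

/-- `hasMonotoneWalk` iff there is a timed walk of enough weight. -/
lemma hasMonotoneWalk_iff_TW (hL : 0 < L) (w : V → ℕ) (v : V) (k : ℕ) :
    hasMonotoneWalk 𝒢 w v k ↔ ∃ t S, TW 𝒢 v t S ∧ k ≤ ∑ u ∈ S, w u := by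
  constructor
  · rintro ⟨z, W, τ, hmono, hedge, hk⟩
    exact ⟨⟨0, hL⟩, W.support.toFinset,
      TW.ofWalk W τ hmono hedge ⟨0, hL⟩ (fun i => by simp [Fin.le_def]), hk⟩
  · rintro ⟨t, S, h, hk⟩
    obtain ⟨z, W, τ, hmono, hedge, _, hsupp⟩ := h.toWalk
    exact ⟨z, W, τ, hmono, hedge, hsupp ▸ hk⟩

end Aux
section Contract
variable {V : Type*} [DecidableEq V] {L : ℕ} {𝒢 : Fin L → SimpleGraph V}
variable {x y : V}

/-- The quotient map contracting `y` onto `x`. -/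
def qmap (x y : V) (hxne : x ≠ y) : V → {u : V // u ≠ y} :=
  fun u => if h : u = y then ⟨x, hxne⟩ else ⟨u, h⟩

/-- The contracted temporal graph. -/
def cG (𝒢 : Fin L → SimpleGraph V) (x y : V) : Fin L → SimpleGraph {u : V // u ≠ y} :=
  fun t => SimpleGraph.fromRel fun a b : {u : V // u ≠ y} =>
    (𝒢 t).Adj a.1 b.1 ∨ (a.1 = x ∧ (𝒢 t).Adj y b.1) ∨ (b.1 = x ∧ (𝒢 t).Adj a.1 y)

/-- The lift of a vertex set of the contracted graph. -/
def liftS (x y : V) (hxne : x ≠ y) (S' : Finset {u : V // u ≠ y}) : Finset V :=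
  S'.image Subtype.val ∪ (if (⟨x, hxne⟩ : {u : V // u ≠ y}) ∈ S' then {y} else ∅)

variable (hxne : x ≠ y)


lemma mem_liftS (S' : Finset {u : V // u ≠ y}) (u : V) :
    u ∈ liftS x y hxne S' ↔
      (∃ a ∈ S', u = a.1) ∨ ((⟨x, hxne⟩ : {u : V // u ≠ y}) ∈ S' ∧ u = y) := by
  unfold liftS
  by_cases hxS : (⟨x, hxne⟩ : {u : V // u ≠ y}) ∈ S'
  · rw [if_pos hxS]
    simp [hxS, eq_comm]
    exact or_comm
  · rw [if_neg hxS]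
    simp [hxS, eq_comm]

lemma liftS_insert_x (S' : Finset {u : V // u ≠ y}) :
    liftS x y hxne (insert ⟨x, hxne⟩ S') = {x, y} ∪ liftS x y hxne S' := by
  ext u
  rw [mem_liftS, Finset.mem_union, mem_liftS]
  constructor
  · rintro (⟨a, ha, rfl⟩ | ⟨-, rfl⟩)
    · rcases Finset.mem_insert.1 ha with rfl | ha
      · exact Or.inl (by simp)
      · exact Or.inr (Or.inl ⟨a, ha, rfl⟩)
    · exact Or.inl (by simp)
  · rintro (h | (⟨a, ha, rfl⟩ | ⟨hx, rfl⟩))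
    · rcases Finset.mem_insert.1 h with rfl | h
      · exact Or.inl ⟨⟨u, hxne⟩, Finset.mem_insert_self _ _, rfl⟩
      · exact Or.inr ⟨Finset.mem_insert_self _ _, Finset.mem_singleton.1 h⟩
    · exact Or.inl ⟨a, Finset.mem_insert_of_mem ha, rfl⟩
    · exact Or.inr ⟨Finset.mem_insert_of_mem hx, rfl⟩

lemma liftS_insert_ne {a : {u : V // u ≠ y}} (hax : a.1 ≠ x) (S' : Finset {u : V // u ≠ y}) :
    liftS x y hxne (insert a S') = insert a.1 (liftS x y hxne S') := by
  have hne' : ¬ (⟨x, hxne⟩ : {u : V // u ≠ y}) = a := fun hh => hax (congrArg Subtype.val hh).symm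
  ext u
  simp only [mem_liftS, Finset.mem_insert]
  constructor
  · rintro (⟨b, hb | hb, rfl⟩ | ⟨hx | hx, rfl⟩)
    · exact Or.inl (by rw [hb])
    · exact Or.inr (Or.inl ⟨b, hb, rfl⟩)
    · exact absurd hx hne'
    · exact Or.inr (Or.inr ⟨hx, rfl⟩)
  · rintro (h | (⟨b, hb, rfl⟩ | ⟨hx, rfl⟩))
    · exact Or.inl ⟨a, Or.inl rfl, h⟩
    · exact Or.inl ⟨b, Or.inr hb, rfl⟩
    · exact Or.inr ⟨Or.inr hx, rfl⟩

lemma qmap_val (a : {u : V // u ≠ y}) : qmap x y hxne a.1 = a := by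
  unfold qmap; rw [dif_neg a.2]

lemma qmap_eq_x_iff {u : V} : qmap x y hxne u = ⟨x, hxne⟩ ↔ u = x ∨ u = y := by
  unfold qmap
  split_ifs with h
  · simp [h]
  · simp [Subtype.ext_iff, h]

lemma qmap_eq_iff {u : V} {a : {u : V // u ≠ y}} (hax : a.1 ≠ x) :
    qmap x y hxne u = a ↔ u = a.1 := by
  unfold qmap
  split_ifs with h
  · simp only [Subtype.ext_iff]
    constructor
    · intro hx; exact absurd hx.symm hax
    · intro hu; exact absurd (hu.symm.trans h) a.2
  · simp [Subtype.ext_iff]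

/-- Forward direction: contract a timed walk. -/
lemma TW.contract {v t S} (h : TW 𝒢 v t S) :
    TW (cG 𝒢 x y) (qmap x y hxne v) t (S.image (qmap x y hxne)) := by
  induction h with
  | nil v t => exact (TW.nil _ t).congr (by simp)
  | @cons v u t t' S hle hadj hrest ih =>
    by_cases hq : qmap x y hxne v = qmap x y hxne u
    · rw [hq]
      refine (ih.mono hle).congr ?_
      rw [Finset.image_insert, hq]
      exact (Finset.insert_eq_self.2 (Finset.mem_image_of_mem _ hrest.start_mem)).symm
    · have hadj' : (cG 𝒢 x y t').Adj (qmap x y hxne v) (qmap x y hxne u) := by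
        simp only [cG, SimpleGraph.fromRel_adj]
        refine ⟨hq, Or.inl ?_⟩
        by_cases hv : v = y <;> by_cases hu : u = y
        · exact absurd (hv.trans hu.symm) hadj.ne
        · exact Or.inr (Or.inl ⟨by simp [qmap, hv],
            by simp only [qmap, dif_neg hu]; exact hv ▸ hadj⟩)
        · exact Or.inr (Or.inr ⟨by simp [qmap, hu],
            by simp only [qmap, dif_neg hv]; exact hu ▸ hadj⟩)
        · exact Or.inl (by simp only [qmap, dif_neg hv, dif_neg hu]; exact hadj)
      exact (TW.cons hle hadj' ih).congr (Finset.image_insert _ _ _).symm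

/-- Detour through the always-present edge `xy`. -/
lemma TW.detour (hxy : ∀ t, (𝒢 t).Adj x y) {c : V} {t S} (h : TW 𝒢 c t S)
    (hc : c = x ∨ c = y) : ∀ d, d = x ∨ d = y → TW 𝒢 d t ({x, y} ∪ S) := by
  have main : TW 𝒢 x t ({x, y} ∪ S) ∧ TW 𝒢 y t ({x, y} ∪ S) := by
    rcases hc with hc | hc
    · rw [hc] at h
      have hxS : x ∈ S := h.start_mem
      have h1 : TW 𝒢 y t (insert y S) := TW.cons le_rfl (hxy t).symm h
      have h2 : TW 𝒢 x t (insert x (insert y S)) := TW.cons le_rfl (hxy t) h1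
      refine ⟨h2.congr (by ext u; simp only [Finset.mem_insert, Finset.mem_union,
        Finset.mem_singleton]; tauto), h1.congr ?_⟩
      ext u
      simp only [Finset.mem_insert, Finset.mem_union, Finset.mem_singleton]
      constructor
      · tauto
      · rintro ((rfl | rfl) | hu) <;> tauto
    · rw [hc] at h
      have hyS : y ∈ S := h.start_mem
      have h1 : TW 𝒢 x t (insert x S) := TW.cons le_rfl (hxy t) h
      have h2 : TW 𝒢 y t (insert y (insert x S)) := TW.cons le_rfl (hxy t).symm h1
      refine ⟨h1.congr ?_, h2.congr (by ext u; simp only [Finset.mem_insert,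
        Finset.mem_union, Finset.mem_singleton]; tauto)⟩
      ext u
      simp only [Finset.mem_insert, Finset.mem_union, Finset.mem_singleton]
      constructor
      · tauto
      · rintro ((rfl | rfl) | hu) <;> tauto
  rintro d (hd | hd)
  · rw [hd]; exact main.1
  · rw [hd]; exact main.2

/-- Backward direction: expand a timed walk of the contracted graph. -/
lemma TW.expand (hxy : ∀ t, (𝒢 t).Adj x y) {v' t S'}
    (h : TW (cG 𝒢 x y) v' t S') :
    ∀ v, qmap x y hxne v = v' → TW 𝒢 v t (liftS x y hxne S') := by
  induction h with
  | nil v' t =>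
    intro v hv
    by_cases hvx : v' = (⟨x, hxne⟩ : {u : V // u ≠ y})
    · subst hvx
      have hvor : v = x ∨ v = y := (qmap_eq_x_iff hxne).1 hv
      refine ((TW.nil v t).detour hxy hvor v hvor).congr ?_
      ext u
      simp only [liftS, Finset.mem_union, Finset.mem_insert, Finset.mem_singleton,
        Finset.image_singleton, Finset.mem_image, if_pos (Finset.mem_singleton_self _)]
      rcases hvor with rfl | rfl <;> simp <;> tauto
    · have hax : v'.1 ≠ x := fun hh => hvx (Subtype.ext hh)
      have hvv : v = v'.1 := (qmap_eq_iff hxne hax).1 hv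
      subst hvv
      refine (TW.nil _ t).congr ?_
      have hnm : (⟨x, hxne⟩ : {u : V // u ≠ y}) ∉ ({v'} : Finset _) := by
        simp only [Finset.mem_singleton]
        exact fun hh => hvx hh.symm
      simp [liftS, hnm]
  | @cons a b t t' S' hle hadj hrest ih =>
    intro v hv
    simp only [cG, SimpleGraph.fromRel_adj] at hadj
    obtain ⟨hne, hr⟩ := hadj
    obtain ⟨a₁, b₁, hadj₁, ha₁, hb₁⟩ :
        ∃ a₁ b₁, (𝒢 t').Adj a₁ b₁ ∧ qmap x y hxne a₁ = a ∧ qmap x y hxne b₁ = b := by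
      have hqy : qmap x y hxne y = ⟨x, hxne⟩ := (qmap_eq_x_iff hxne).2 (Or.inr rfl)
      rcases hr with (h1 | h2 | h3) | (h1 | h2 | h3)
      · exact ⟨a.1, b.1, h1, qmap_val hxne a, qmap_val hxne b⟩
      · exact ⟨y, b.1, h2.2, hqy.trans (Subtype.ext h2.1).symm, qmap_val hxne b⟩
      · exact ⟨a.1, y, h3.2, qmap_val hxne a, hqy.trans (Subtype.ext h3.1).symm⟩
      · exact ⟨a.1, b.1, h1.symm, qmap_val hxne a, qmap_val hxne b⟩
      · exact ⟨a.1, y, h2.2.symm, qmap_val hxne a, hqy.trans (Subtype.ext h2.1).symm⟩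
      · exact ⟨y, b.1, h3.2.symm, hqy.trans (Subtype.ext h3.1).symm, qmap_val hxne b⟩
    have hstep : TW 𝒢 a₁ t (insert a₁ (liftS x y hxne S')) :=
      TW.cons hle hadj₁ (ih b₁ hb₁)
    by_cases hax : a.1 = x
    · obtain rfl : a = ⟨x, hxne⟩ := Subtype.ext hax
      have hvor : v = x ∨ v = y := (qmap_eq_x_iff hxne).1 hv
      have haor : a₁ = x ∨ a₁ = y := (qmap_eq_x_iff hxne).1 ha₁
      rw [liftS_insert_x hxne]
      refine (hstep.detour hxy haor v hvor).congr ?_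
      rw [Finset.union_insert]
      exact Finset.insert_eq_self.2
        (Finset.mem_union.2 (Or.inl (by rcases haor with h | h <;> simp [h])))
    · have hva : v = a.1 := (qmap_eq_iff hxne hax).1 hv
      have ha₁a : a₁ = a.1 := (qmap_eq_iff hxne hax).1 ha₁
      rw [ha₁a] at hstep
      rw [hva, liftS_insert_ne hxne hax]
      exact hstep
end Contract

section Weights
variable {V : Type*} [DecidableEq V] {x y : V} (hxne : x ≠ y)

lemma sum_le_contract (w : V → ℕ) (S : Finset V) :
    ∑ u ∈ S, w u ≤
      ∑ a ∈ S.image (qmap x y hxne), (if a.1 = x then w x + w y else w a.1) := by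
  have hfib : ∑ a ∈ S.image (qmap x y hxne),
      ∑ u ∈ S.filter (fun u => qmap x y hxne u = a), w u = ∑ u ∈ S, w u :=
    Finset.sum_fiberwise_of_maps_to (fun u hu => Finset.mem_image_of_mem _ hu) w
  rw [← hfib]
  refine Finset.sum_le_sum ?_
  intro a ha
  by_cases hax : a.1 = x
  · obtain rfl : a = ⟨x, hxne⟩ := Subtype.ext hax
    rw [if_pos rfl]
    calc ∑ u ∈ S.filter (fun u => qmap x y hxne u = ⟨x, hxne⟩), w u
        ≤ ∑ u ∈ ({x, y} : Finset V), w u := by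
          refine Finset.sum_le_sum_of_subset ?_
          intro u hu
          rcases (qmap_eq_x_iff hxne).1 (Finset.mem_filter.1 hu).2 with h | h <;>
            simp [h]
      _ = w x + w y := Finset.sum_pair hxne
  · rw [if_neg hax]
    calc ∑ u ∈ S.filter (fun u => qmap x y hxne u = a), w u
        ≤ ∑ u ∈ ({a.1} : Finset V), w u := by
          refine Finset.sum_le_sum_of_subset ?_
          intro u hu
          have := (qmap_eq_iff hxne hax).1 (Finset.mem_filter.1 hu).2
          simp [this]
      _ = w a.1 := Finset.sum_singleton _ _

lemma sum_lift_ge (w : V → ℕ) (S' : Finset {u : V // u ≠ y}) :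
    ∑ a ∈ S', (if a.1 = x then w x + w y else w a.1) ≤ ∑ u ∈ liftS x y hxne S', w u := by
  have himg : ∑ u ∈ S'.image Subtype.val, w u = ∑ a ∈ S', w a.1 :=
    Finset.sum_image (fun a _ b _ h => Subtype.ext h)
  unfold liftS
  by_cases hxS : (⟨x, hxne⟩ : {u : V // u ≠ y}) ∈ S'
  · rw [if_pos hxS]
    have hdisj : Disjoint (S'.image Subtype.val) ({y} : Finset V) := by
      rw [Finset.disjoint_singleton_right]
      intro hy
      obtain ⟨a, _, ha⟩ := Finset.mem_image.1 hy
      exact a.2 ha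
    rw [Finset.sum_union hdisj, Finset.sum_singleton, himg]
    have hcongr : ∀ a ∈ S', (if a.1 = x then w x + w y else w a.1) =
        w a.1 + (if a = ⟨x, hxne⟩ then w y else 0) := by
      intro a _
      by_cases hax : a.1 = x
      · obtain rfl : a = ⟨x, hxne⟩ := Subtype.ext hax
        simp
      · rw [if_neg hax, if_neg (fun hh => hax (by rw [hh])), add_zero]
    rw [Finset.sum_congr rfl hcongr, Finset.sum_add_distrib,
      Finset.sum_ite_eq' S' (⟨x, hxne⟩ : {u : V // u ≠ y}) (fun _ => w y), if_pos hxS]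
  · rw [if_neg hxS, Finset.union_empty, himg]
    refine le_of_eq (Finset.sum_congr rfl ?_)
    intro a ha
    exact if_neg (fun hax => hxS ((Subtype.ext hax : a = ⟨x, hxne⟩) ▸ ha))

end Weights

/-- If the edge `xy` appears in every snapshot of a temporal graph with
connected underlying graph, then contracting `xy` in every snapshot — identifying `y` with
`x`, giving the merged vertex weight `w x + w y`, and replacing the start vertex by the
merged vertex if it is `x` or `y` — preserves the answer to Weighted k-arb NS-TEXP. -/
theorem stmt18 {V : Type*} [Fintype V] [DecidableEq V] {L : ℕ} (hL : 0 < L)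
    (𝒢 : Fin L → SimpleGraph V) (hconn : (⨆ t, 𝒢 t).Connected)
    (x y : V) (hxy : ∀ t, (𝒢 t).Adj x y)
    (w : V → ℕ) (hw : ∀ u, 0 < w u) (v : V) (k : ℕ) :
    hasMonotoneWalk 𝒢 w v k ↔
      hasMonotoneWalk
        (fun t => SimpleGraph.fromRel fun a b : {u : V // u ≠ y} =>
          (𝒢 t).Adj a.1 b.1 ∨ (a.1 = x ∧ (𝒢 t).Adj y b.1) ∨ (b.1 = x ∧ (𝒢 t).Adj a.1 y))
        (fun u => if u.1 = x then w x + w y else w u.1)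
        (if h : v = y then ⟨x, (hxy ⟨0, hL⟩).ne⟩ else ⟨v, h⟩) k := by
  have hxne : x ≠ y := (hxy ⟨0, hL⟩).ne
  rw [hasMonotoneWalk_iff_TW hL, hasMonotoneWalk_iff_TW hL]
  constructor
  · rintro ⟨t, S, hTW, hk⟩
    refine ⟨t, S.image (qmap x y hxne), ?_, le_trans hk (sum_le_contract hxne w S)⟩
    exact hTW.contract hxne
  · rintro ⟨t, S', hTW, hk⟩
    have hTW' : TW (cG 𝒢 x y) (qmap x y hxne v) t S' := hTW
    exact ⟨t, liftS x y hxne S', hTW'.expand hxne hxy v rfl,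
      le_trans hk (sum_lift_ge hxne w S')⟩
end
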